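/- arXiv:1508.06922 — 9 statements merged into one kernel-verified Lean document; each statement's English description precedes it below -/
import Mathlib

section
/- Let a < b be real numbers, V : ℝ → ℝ continuous, and E ∈ ℝ. Let F : [a,b] → ℝ be continuously differentiable with F > 0 and F' absolutely continuous, and let φ : [a,b] → ℝ be continuously differentiable with φ' absolutely continuous. Then ∫_a^b F(x)φ(x)·( −(φ/F)''(x) + (V(x)−E)·(φ(x)/F(x)) ) dx = F(a)φ(a)(φ/F)'(a) − F(b)φ(b)(φ/F)'(b) + ∫_a^b ( (φ'(x))² + ( V(x) − E − (F'(x)/F(x))² )·(φ(x))² ) dx. -/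
/-!
Write `u = φ / F`. The term `-F φ u''` is integrated by parts against the absolutely continuous
functions `F φ` and `u'`, which produces the boundary terms and `∫ (F φ)' u'`; since `φ = F u`,
pointwise `(F φ)' u' = φ'² - (F'/F)² φ²`. Absolute continuity of `u' = (φ' F - φ F') / F²` holds
because products of absolutely continuous functions are absolutely continuous and `1/F` is `C¹`.
-/

open MeasureTheory Set

/-- `f` is continuously differentiable on `[a,b]` with absolutely continuous derivative:
its derivative `deriv f` is continuous there and is the indefinite integral of its own
(almost everywhere) derivative `deriv (deriv f)`, which is Lebesgue integrable. -/
def C1WithACDeriv (f : ℝ → ℝ) (a b : ℝ) : Prop :=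
  (∀ x ∈ Set.Icc a b, DifferentiableAt ℝ f x) ∧
  ContinuousOn (deriv f) (Set.Icc a b) ∧
  IntegrableOn (deriv (deriv f)) (Set.Icc a b) ∧
  ∀ x ∈ Set.Icc a b, deriv f x = deriv f a + ∫ t in a..x, deriv (deriv f) t

open Filter intervalIntegral

namespace AbsolutelyContinuousOnInterval

variable {f g f' : ℝ → ℝ} {a b : ℝ}

theorem congr (hf : AbsolutelyContinuousOnInterval f a b) (h : EqOn f g (uIcc a b)) :
    AbsolutelyContinuousOnInterval g a b := by
  refine hf.congr' (mem_inf_of_right (mem_principal.2 fun E hE => ?_))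
  exact Finset.sum_congr rfl fun i hi => by rw [h (hE.1 i hi).1, h (hE.1 i hi).2]

theorem of_hasDerivAt (hf : ∀ x ∈ uIcc a b, HasDerivAt f (f' x) x)
    (hf' : ContinuousOn f' (uIcc a b)) : AbsolutelyContinuousOnInterval f a b := by
  obtain ⟨C, hC⟩ := isCompact_uIcc.exists_bound_of_continuousOn hf'
  refine LipschitzOnWith.absolutelyContinuousOnInterval (K := C.toNNReal) ?_
  exact (convex_uIcc a b).lipschitzOnWith_of_nnnorm_hasDerivWithin_le
    (fun x hx => (hf x hx).hasDerivWithinAt)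
    fun x hx => by
      rw [← NNReal.coe_le_coe, coe_nnnorm, Real.coe_toNNReal']
      exact le_max_of_le_left (hC x hx)

theorem of_eq_add_integral (hf' : IntervalIntegrable f' volume a b)
    (hf : ∀ x ∈ uIcc a b, f x = f a + ∫ t in a..x, f' t) :
    AbsolutelyContinuousOnInterval f a b :=
  congr (((LipschitzWith.const (f a)).lipschitzOnWith.absolutelyContinuousOnInterval).fun_add
    (hf'.absolutelyContinuousOnInterval_intervalIntegral left_mem_uIcc)) fun x hx => (hf x hx).symm

end AbsolutelyContinuousOnInterval

section

open AbsolutelyContinuousOnInterval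

variable {f u v : ℝ → ℝ} {a b : ℝ}

theorem C1WithACDeriv.absolutelyContinuousOnInterval (hf : C1WithACDeriv f a b) (hab : a ≤ b) :
    AbsolutelyContinuousOnInterval f a b :=
  of_hasDerivAt (fun x hx => (hf.1 x (uIcc_of_le hab ▸ hx)).hasDerivAt) (uIcc_of_le hab ▸ hf.2.1)

theorem C1WithACDeriv.absolutelyContinuousOnInterval_deriv (hf : C1WithACDeriv f a b)
    (hab : a ≤ b) : AbsolutelyContinuousOnInterval (deriv f) a b :=
  of_eq_add_integral (uIcc_of_le hab ▸ hf.2.2.1).intervalIntegrable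
    (uIcc_of_le hab ▸ hf.2.2.2)

theorem absolutelyContinuousOnInterval_deriv_div
    (hu : ∀ x ∈ uIcc a b, DifferentiableAt ℝ u x) (hv : ∀ x ∈ uIcc a b, DifferentiableAt ℝ v x)
    (hv₀ : ∀ x ∈ uIcc a b, v x ≠ 0) (hu' : AbsolutelyContinuousOnInterval (deriv u) a b)
    (hv' : AbsolutelyContinuousOnInterval (deriv v) a b) :
    AbsolutelyContinuousOnInterval (deriv fun x => u x / v x) a b := by
  have hu_ac := of_hasDerivAt (fun x hx => (hu x hx).hasDerivAt) hu'.continuousOn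
  have hv_ac := of_hasDerivAt (fun x hx => (hv x hx).hasDerivAt) hv'.continuousOn
  have hv_inv : AbsolutelyContinuousOnInterval (fun x => (v x)⁻¹) a b :=
    of_hasDerivAt (fun x hx => (hv x hx).hasDerivAt.inv (hv₀ x hx))
      (hv'.continuousOn.neg.div (hv_ac.continuousOn.pow 2) fun x hx => pow_ne_zero 2 (hv₀ x hx))
  refine (((hu'.fun_mul hv_ac).fun_sub (hu_ac.fun_mul hv')).fun_mul hv_inv |>.fun_mul hv_inv).congr
    fun x hx => ?_
  rw [deriv_fun_div (hu x hx) (hv x hx) (hv₀ x hx)]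
  field_simp [hv₀ x hx]

theorem deriv_mul_mul_deriv_div {x : ℝ} (hu : DifferentiableAt ℝ u x)
    (hv : DifferentiableAt ℝ v x) (hv₀ : v x ≠ 0) :
    deriv (fun y => v y * u y) x * deriv (fun y => u y / v y) x
      = deriv u x ^ 2 - (deriv v x / v x) ^ 2 * u x ^ 2 := by
  rw [deriv_fun_mul hv hu, deriv_fun_div hu hv hv₀]
  field_simp
  ring

end

/-- Integration-by-parts identity (Lemma 3.1, second part) on a single edge `[a,b]`:
for `F > 0` and `φ`, both `C¹` with absolutely continuous derivative,
`∫_a^b Fφ·(−(φ/F)'' + (V−E)·(φ/F)) = F(a)φ(a)(φ/F)'(a) − F(b)φ(b)(φ/F)'(b)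
  + ∫_a^b ((φ')² + (V−E−(F'/F)²)·φ²)`. -/
theorem agmon_integration_by_parts (a b : ℝ) (hab : a < b) (V : ℝ → ℝ)
    (hV : Continuous V) (E : ℝ) (F φ : ℝ → ℝ)
    (hF : C1WithACDeriv F a b) (hFpos : ∀ x ∈ Set.Icc a b, 0 < F x)
    (hφ : C1WithACDeriv φ a b) :
    ∫ x in a..b,
        F x * φ x *
          (-(deriv (deriv (fun y => φ y / F y)) x) + (V x - E) * (φ x / F x))
      = F a * φ a * deriv (fun y => φ y / F y) a
        - F b * φ b * deriv (fun y => φ y / F y) b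
        + ∫ x in a..b,
            ((deriv φ x) ^ 2 + (V x - E - (deriv F x / F x) ^ 2) * (φ x) ^ 2) := by
  rw [← uIcc_of_le hab.le] at hFpos
  have hF₀ x (hx : x ∈ uIcc a b) : F x ≠ 0 := (hFpos x hx).ne'
  have hFd x (hx : x ∈ uIcc a b) := hF.1 x (uIcc_of_le hab.le ▸ hx)
  have hφd x (hx : x ∈ uIcc a b) := hφ.1 x (uIcc_of_le hab.le ▸ hx)
  have hFφ := (hF.absolutelyContinuousOnInterval hab.le).fun_mul
    (hφ.absolutelyContinuousOnInterval hab.le)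
  have hu' := absolutelyContinuousOnInterval_deriv_div hφd hFd hF₀
    (hφ.absolutelyContinuousOnInterval_deriv hab.le) (hF.absolutelyContinuousOnInterval_deriv hab.le)
  have hpot : IntervalIntegrable (fun x => (V x - E) * φ x ^ 2) volume a b :=
    (((hV.continuousOn.sub continuousOn_const).mul
      ((hφ.absolutelyContinuousOnInterval hab.le).continuousOn.pow 2))).intervalIntegrable
  have hlhs : ∫ x in a..b,
        F x * φ x * (-(deriv (deriv (fun y => φ y / F y)) x) + (V x - E) * (φ x / F x))
      = (∫ x in a..b, (V x - E) * φ x ^ 2)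
        - ∫ x in a..b, F x * φ x * deriv (deriv (fun y => φ y / F y)) x := by
    rw [← integral_sub hpot (hu'.intervalIntegrable_deriv.continuousOn_mul hFφ.continuousOn)]
    refine integral_congr fun x hx => ?_
    field_simp [hF₀ x hx]
    ring
  have hrhs : ∫ x in a..b,
        ((deriv φ x) ^ 2 + (V x - E - (deriv F x / F x) ^ 2) * (φ x) ^ 2)
      = (∫ x in a..b, deriv (fun y => F y * φ y) x * deriv (fun y => φ y / F y) x)
        + ∫ x in a..b, (V x - E) * φ x ^ 2 := by
    rw [← integral_add (hFφ.intervalIntegrable_deriv.mul_continuousOn hu'.continuousOn) hpot]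
    refine integral_congr fun x hx => ?_
    rw [deriv_mul_mul_deriv_div (hφd x hx) (hFd x hx) (hF₀ x hx)]
    ring
  rw [hlhs, hrhs, hFφ.integral_mul_deriv_eq_deriv_mul hu']
  ring
end

section
/- Let a < a₁ < a₂ be real numbers, V : ℝ → ℝ continuous, and E ∈ ℝ. Let η : ℝ → ℝ be smooth with 0 ≤ η ≤ 1, η(x) = 0 for x ≤ a₁, and η(x) = 1 for x ≥ a₂. Let F : [a,∞) → ℝ be twice continuously differentiable with F > 0, and let ψ : [a,∞) → ℝ be twice continuously differentiable with ψ > 0 and ψ''(x) ≥ (V(x)−E)ψ(x) for all x ≥ a. Define G(x) := −(1/2)·(F(x)ψ(x))²·(η²)'(x). Then there exists a finite constant C₀ ≥ 0 such that for all x ≥ a: F(x)²·η(x)·ψ(x)·( −(ηψ)''(x) + (V(x)−E)·η(x)ψ(x) ) ≤ C₀·χ_{[a₁,a₂]}(x)·ψ(x)² + G'(x), where χ_{[a₁,a₂]} is the indicator function of the interval [a₁,a₂]. -/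
open MeasureTheory Set

/-- The key pointwise bound (Lemma 3.2) on a single edge `[a,∞)`:
for a smooth cutoff `η` vanishing below `a₁` and equal to `1` above `a₂`, a positive
`C²` multiplier `F`, and a positive `C²` subsolution `ψ` of `−ψ'' + Vψ = Eψ`, one has
`F²·η·ψ·(−(ηψ)'' + (V−E)·ηψ) ≤ C₀·χ_{[a₁,a₂]}·ψ² + G'` with
`G = −(1/2)·(Fψ)²·(η²)'`. -/
theorem agmon_cutoff_pointwise_bound (a a₁ a₂ : ℝ) (ha₁ : a < a₁) (ha₂ : a₁ < a₂)
    (V : ℝ → ℝ) (hV : Continuous V) (E : ℝ)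
    (η : ℝ → ℝ) (hη : ContDiff ℝ (⊤ : ℕ∞) η)
    (hη01 : ∀ x, 0 ≤ η x ∧ η x ≤ 1)
    (hη0 : ∀ x ≤ a₁, η x = 0) (hη1 : ∀ x, a₂ ≤ x → η x = 1)
    (F : ℝ → ℝ) (hF : ContDiffOn ℝ 2 F (Set.Ici a)) (hFpos : ∀ x ≥ a, 0 < F x)
    (ψ : ℝ → ℝ) (hψ : ContDiffOn ℝ 2 ψ (Set.Ici a)) (hψpos : ∀ x ≥ a, 0 < ψ x)
    (hsub : ∀ x ≥ a, (V x - E) * ψ x ≤ deriv (deriv ψ) x)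
    (G : ℝ → ℝ)
    (hG : G = fun x => -(1 / 2) * (F x * ψ x) ^ 2 * deriv (fun y => (η y) ^ 2) x) :
    ∃ C₀ : ℝ, 0 ≤ C₀ ∧ ∀ x ≥ a,
      (F x) ^ 2 * η x * ψ x *
          (-(deriv (deriv (fun y => η y * ψ y)) x) + (V x - E) * (η x * ψ x))
        ≤ C₀ * (Set.Icc a₁ a₂).indicator (fun _ => (1 : ℝ)) x * (ψ x) ^ 2
          + deriv G x := by
  have hηd : Differentiable ℝ η := hη.differentiable (by simp)
  have hηinf : ContDiff ℝ (⊤ : ℕ∞) η := hη.of_le (by simp)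
  have hηc2 : ContDiff ℝ (⊤ : ℕ∞) (deriv η) := (contDiff_infty_iff_deriv.mp hηinf).2
  have hηdd : Differentiable ℝ (deriv η) := hηc2.differentiable (by simp)
  -- `deriv η` vanishes outside `(a₁, a₂)`
  have hη'0 : ∀ x, x ≤ a₁ ∨ a₂ ≤ x → deriv η x = 0 := by
    intro x hx
    rcases hx with hx | hx
    · have h1 : HasDerivWithinAt η 0 (Iic a₁) x :=
        (hasDerivWithinAt_const x (Iic a₁) (0 : ℝ)).congr (fun y hy => hη0 y hy) (hη0 x hx)
      have h2 : HasDerivWithinAt η (deriv η x) (Iic a₁) x :=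
        ((hηd x).hasDerivAt).hasDerivWithinAt
      have hu := uniqueDiffOn_Iic a₁ x hx
      rw [← h2.derivWithin hu, h1.derivWithin hu]
    · have h1 : HasDerivWithinAt η 0 (Ici a₂) x :=
        (hasDerivWithinAt_const x (Ici a₂) (1 : ℝ)).congr (fun y hy => hη1 y hy) (hη1 x hx)
      have h2 : HasDerivWithinAt η (deriv η x) (Ici a₂) x :=
        ((hηd x).hasDerivAt).hasDerivWithinAt
      have hu := uniqueDiffOn_Ici a₂ x hx
      rw [← h2.derivWithin hu, h1.derivWithin hu]
  have hsubset : Ioi a ⊆ Ici a := Ioi_subset_Ici_self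
  have hψ2 : ContDiffOn ℝ 2 ψ (Ioi a) := hψ.mono hsubset
  have hF2 : ContDiffOn ℝ 2 F (Ioi a) := hF.mono hsubset
  have hψd : ∀ y ∈ Ioi a, DifferentiableAt ℝ ψ y := fun y hy =>
    (hψ2.contDiffAt (Ioi_mem_nhds hy)).differentiableAt (by norm_num)
  have hFd : ∀ y ∈ Ioi a, DifferentiableAt ℝ F y := fun y hy =>
    (hF2.contDiffAt (Ioi_mem_nhds hy)).differentiableAt (by norm_num)
  have hψ'c : ContDiffOn ℝ 1 (deriv ψ) (Ioi a) := hψ2.deriv_of_isOpen isOpen_Ioi (by norm_num)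
  have hF'c : ContDiffOn ℝ 1 (deriv F) (Ioi a) := hF2.deriv_of_isOpen isOpen_Ioi (by norm_num)
  have hψ'd : ∀ y ∈ Ioi a, DifferentiableAt ℝ (deriv ψ) y := fun y hy =>
    (hψ'c.contDiffAt (Ioi_mem_nhds hy)).differentiableAt (by norm_num)
  have hF'd : ∀ y ∈ Ioi a, DifferentiableAt ℝ (deriv F) y := fun y hy =>
    (hF'c.contDiffAt (Ioi_mem_nhds hy)).differentiableAt (by norm_num)
  -- bound the error term on the compact set
  have hIcc : Icc a₁ a₂ ⊆ Ioi a := fun y hy => lt_of_lt_of_le ha₁ hy.1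
  have hQc : ContinuousOn
      (fun y => 2 * F y * deriv F y * η y * deriv η y + (F y) ^ 2 * (deriv η y) ^ 2)
      (Icc a₁ a₂) := by
    apply ContinuousOn.mono _ hIcc
    have hFc : ContinuousOn F (Ioi a) := hF2.continuousOn
    have hF'cc : ContinuousOn (deriv F) (Ioi a) :=
      hF2.continuousOn_deriv_of_isOpen isOpen_Ioi (by norm_num)
    have hηcc : ContinuousOn η (Ioi a) := hη.continuous.continuousOn
    have hη'cc : ContinuousOn (deriv η) (Ioi a) := hηc2.continuous.continuousOn
    exact ((((continuousOn_const.mul hFc).mul hF'cc).mul hηcc).mul hη'cc).add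
      ((hFc.pow 2).mul (hη'cc.pow 2))
  obtain ⟨C, hC⟩ := isCompact_Icc.exists_bound_of_continuousOn hQc
  refine ⟨max C 0, le_max_right _ _, ?_⟩
  intro x hx
  rcases hx.lt_or_eq with hax | hax
  · -- interior case `a < x`
    have dψx := hψd x hax
    have dψ' := hψ'd x hax
    have dFx := hFd x hax
    have dF' := hF'd x hax
    -- second derivative of `η * ψ`
    have hd1 : (deriv fun y => η y * ψ y) =ᶠ[nhds x]
        fun y => deriv η y * ψ y + η y * deriv ψ y := by
      filter_upwards [Ioi_mem_nhds hax] with y hy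
      exact deriv_mul (hηd y) (hψd y hy)
    have hdd : deriv (deriv fun y => η y * ψ y) x
        = deriv (deriv η) x * ψ x + 2 * deriv η x * deriv ψ x + η x * deriv (deriv ψ) x := by
      rw [hd1.deriv_eq, deriv_fun_add (f := fun y => deriv η y * ψ y) (g := fun y => η y * deriv ψ y) ((hηdd x).mul dψx) ((hηd x).mul dψ'),
        deriv_fun_mul (hηdd x) dψx, deriv_fun_mul (hηd x) dψ']
      ring
    -- rewrite `G`
    have hGfun : G = fun y => -((F y * ψ y) ^ 2 * (η y * deriv η y)) := by
      funext y
      simp only [hG]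
      have h2 : deriv (fun z => η z ^ 2) y = 2 * η y * deriv η y := by
        rw [deriv_fun_pow (hηd y) 2]; ring
      rw [h2]; ring
    have hdG : deriv G x =
        -((2 * (F x * ψ x) * (deriv F x * ψ x + F x * deriv ψ x)) * (η x * deriv η x)
          + (F x * ψ x) ^ 2 * (deriv η x * deriv η x + η x * deriv (deriv η) x)) := by
      rw [hGfun]
      have d1 : DifferentiableAt ℝ (fun y => F y * ψ y) x := dFx.mul dψx
      have d2 : DifferentiableAt ℝ (fun y => (F y * ψ y) ^ 2) x := d1.pow 2
      have d3 : DifferentiableAt ℝ (fun y => η y * deriv η y) x := (hηd x).mul (hηdd x)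
      rw [deriv.fun_neg, deriv_fun_mul d2 d3, deriv_fun_pow d1 2, deriv_fun_mul dFx dψx,
        deriv_fun_mul (hηd x) (hηdd x)]
      push_cast
      ring
    -- bound for the cutoff error term
    have hQb : (ψ x) ^ 2 * (2 * F x * deriv F x * η x * deriv η x
          + (F x) ^ 2 * (deriv η x) ^ 2)
        ≤ max C 0 * (Icc a₁ a₂).indicator (fun _ => (1 : ℝ)) x * (ψ x) ^ 2 := by
      by_cases hmem : x ∈ Icc a₁ a₂
      · rw [indicator_of_mem hmem]
        have h1 : |2 * F x * deriv F x * η x * deriv η x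
            + (F x) ^ 2 * (deriv η x) ^ 2| ≤ C := hC x hmem
        have h2 : 2 * F x * deriv F x * η x * deriv η x
            + (F x) ^ 2 * (deriv η x) ^ 2 ≤ max C 0 :=
          le_trans (le_trans (le_abs_self _) h1) (le_max_left _ _)
        nlinarith [sq_nonneg (ψ x)]
      · rw [indicator_of_notMem hmem]
        have hd0 : deriv η x = 0 := by
          rcases lt_or_ge x a₁ with h | h
          · exact hη'0 x (Or.inl h.le)
          · refine hη'0 x (Or.inr ?_)
            by_contra hcon
            exact hmem ⟨h, (not_le.mp hcon).le⟩
        rw [hd0]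
        ring_nf
        simp
    have hsubx := hsub x hx
    have hψx := hψpos x hx
    have hηx := (hη01 x).1
    rw [hdd, hdG]
    nlinarith [hQb, mul_nonneg (mul_nonneg (mul_nonneg (sq_nonneg (F x)) (sq_nonneg (η x)))
      hψx.le) (sub_nonneg.mpr hsubx)]
  · -- boundary case `x = a`
    have hxa : x < a₁ := by rw [← hax]; exact ha₁
    have hηx : η x = 0 := hη0 x hxa.le
    have hGev : G =ᶠ[nhds x] fun _ => (0 : ℝ) := by
      filter_upwards [Iio_mem_nhds hxa] with y hy
      have h2 : (fun z => η z ^ 2) =ᶠ[nhds y] fun _ => (0 : ℝ) := by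
        filter_upwards [Iio_mem_nhds hy] with z hz
        rw [hη0 z hz.le]; ring
      rw [hG]
      simp [h2.deriv_eq]
    have hG' : deriv G x = 0 := by rw [hGev.deriv_eq, deriv_const]
    have hind : x ∉ Icc a₁ a₂ := fun h => absurd h.1 (not_le.mpr hxa)
    rw [hG', indicator_of_notMem hind, hηx]
    simp
end

section
/- Let a ∈ ℝ, V : [a,∞) → ℝ continuous, E ∈ ℝ, and δ > 0. Let ψ : [a,∞) → ℝ be twice continuously differentiable with ψ > 0, ψ''(x) ≥ (V(x)−E)ψ(x) for all x ≥ a, and ψ square-integrable on [a,∞). Let F : [a,∞) → ℝ be continuously differentiable with F > 0 and V(x) − E − (F'(x)/F(x))² ≥ δ for all x ≥ a. Then for every b > a, the functions F·ψ and (F·ψ)' are square-integrable on [b,∞), i.e. ∫_b^∞ ( ((Fψ)'(x))² + (F(x)ψ(x))² ) dx < ∞. -/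
open MeasureTheory Set

/-!
Since `V - E ≥ δ + (F'/F)² > 0`, the subsolution `ψ` is convex; being positive and square
integrable it must be nonincreasing, so `ψ' ≤ 0`. With `u = Fψ` one computes
`(F²ψψ')' - u'² = F²ψψ'' - F'²ψ² ≥ ((V - E)F² - F'²)ψ² ≥ δu²`, hence
`u'² + δu² ≤ (F²ψψ')'`. Integrating over `[b, R]` bounds `∫_b^R (u'² + δu²)` by
`-F(b)²ψ(b)ψ'(b)`, because the boundary term at `R` is `≤ 0`.
-/

theorem not_integrableOn_Ici_of_pos_le {g : ℝ → ℝ} {c x₀ : ℝ} (hc : 0 < c)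
    (hg : ∀ x ∈ Ici x₀, c ≤ g x) : ¬ IntegrableOn g (Ici x₀) := by
  intro h
  have hconst : IntegrableOn (fun _ => c) (Ici x₀) :=
    h.mono' aestronglyMeasurable_const <| (ae_restrict_mem measurableSet_Ici).mono
      fun x hx => (Real.norm_of_nonneg hc.le).trans_le (hg x hx)
  simp [integrableOn_const_iff, hc.ne', Real.volume_Ici] at hconst

theorem deriv_nonpos_of_deriv_deriv_nonneg_of_integrableOn_sq {f : ℝ → ℝ} {a x₀ : ℝ}
    (hf : DifferentiableOn ℝ f (Ioi a)) (hf' : DifferentiableOn ℝ (deriv f) (Ioi a))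
    (hf'' : ∀ x ∈ Ioi a, 0 ≤ deriv (deriv f) x) (hpos : ∀ x ∈ Ioi a, 0 < f x)
    (hL2 : IntegrableOn (fun x => f x ^ 2) (Ioi a)) (hx₀ : a < x₀) : deriv f x₀ ≤ 0 := by
  by_contra! h
  have hsub : Ici x₀ ⊆ Ioi a := Ici_subset_Ioi.mpr hx₀
  have hf'mono : MonotoneOn (deriv f) (Ioi a) :=
    monotoneOn_of_deriv_nonneg (convex_Ioi a) hf'.continuousOn (by rwa [interior_Ioi])
      (by rwa [interior_Ioi])
  have hmono : MonotoneOn f (Ici x₀) := by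
    refine monotoneOn_of_deriv_nonneg (convex_Ici x₀) (hf.continuousOn.mono hsub)
      (hf.mono (interior_subset.trans hsub)) fun x hx => ?_
    rw [interior_Ici] at hx
    exact h.le.trans (hf'mono hx₀ (hsub (mem_Ici.mpr hx.le)) hx.le)
  refine not_integrableOn_Ici_of_pos_le (pow_pos (hpos x₀ hx₀) 2) (fun x hx => ?_)
    (hL2.mono_set hsub)
  exact pow_le_pow_left₀ (hpos x₀ hx₀).le (hmono self_mem_Ici hx hx) 2

theorem integrableOn_Ici_of_nonneg_of_le_deriv {g G G' : ℝ → ℝ} {b M : ℝ}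
    (hg : ContinuousOn g (Ici b)) (hg₀ : ∀ x ∈ Ici b, 0 ≤ g x)
    (hGc : ContinuousOn G (Ici b)) (hG : ∀ x ∈ Ioi b, HasDerivAt G (G' x) x)
    (hgG : ∀ x ∈ Ioi b, g x ≤ G' x) (hM : ∀ x ∈ Ioi b, G x ≤ M) :
    IntegrableOn g (Ici b) := by
  have hgR : ∀ R, IntegrableOn g (Icc b R) := fun R =>
    (hg.mono Icc_subset_Ici_self).integrableOn_Icc
  rw [integrableOn_Ici_iff_integrableOn_Ioi]
  refine integrableOn_Ioi_of_intervalIntegral_norm_bounded (M - G b) b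
    (fun R => (hgR R).mono_set Ioc_subset_Icc_self) Filter.tendsto_id ?_
  filter_upwards [Filter.eventually_gt_atTop b] with R hR
  calc ∫ x in b..R, ‖g x‖
      = ∫ x in b..R, g x := intervalIntegral.integral_congr fun x hx =>
        Real.norm_of_nonneg (hg₀ x (uIcc_of_le hR.le ▸ hx).1)
    _ ≤ G R - G b := intervalIntegral.integral_le_sub_of_hasDeriv_right_of_le hR.le
        (hGc.mono Icc_subset_Ici_self) (fun x hx => (hG x hx.1).hasDerivWithinAt) (hgR R)
        fun x hx => hgG x hx.1
    _ ≤ M - G b := by linarith [hM R hR]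

theorem agmon_pointwise {F ψ : ℝ → ℝ} {x W δ : ℝ} (hF : DifferentiableAt ℝ F x)
    (hψ : DifferentiableAt ℝ ψ x) (hFx : 0 < F x) (hψx : 0 ≤ ψ x)
    (hsub : W * ψ x ≤ deriv (deriv ψ) x) (hW : δ ≤ W - (deriv F x / F x) ^ 2) :
    deriv (fun y => F y * ψ y) x ^ 2 + δ * (F x * ψ x) ^ 2 ≤
      2 * F x * deriv F x * (ψ x * deriv ψ x) +
        F x ^ 2 * (deriv ψ x * deriv ψ x + ψ x * deriv (deriv ψ) x) := by
  rw [deriv_fun_mul hF hψ]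
  have hWF : δ * F x ^ 2 + deriv F x ^ 2 ≤ W * F x ^ 2 := by
    have := mul_le_mul_of_nonneg_right hW (sq_nonneg (F x))
    rwa [sub_mul, div_pow, div_mul_cancel₀ _ (pow_ne_zero 2 hFx.ne'), le_sub_iff_add_le] at this
  have hψψ'' : W * F x ^ 2 * ψ x ^ 2 ≤ F x ^ 2 * (ψ x * deriv (deriv ψ) x) := by
    nlinarith [mul_le_mul_of_nonneg_left hsub (mul_nonneg (sq_nonneg (F x)) hψx)]
  nlinarith [mul_le_mul_of_nonneg_right hWF (sq_nonneg (ψ x))]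

theorem hasDerivAt_sq_mul_mul_deriv {F ψ : ℝ → ℝ} {x : ℝ} (hF : DifferentiableAt ℝ F x)
    (hψ : DifferentiableAt ℝ ψ x) (hψ' : DifferentiableAt ℝ (deriv ψ) x) :
    HasDerivAt (fun y => F y ^ 2 * (ψ y * deriv ψ y))
      (2 * F x * deriv F x * (ψ x * deriv ψ x) +
        F x ^ 2 * (deriv ψ x * deriv ψ x + ψ x * deriv (deriv ψ) x)) x :=
  ((hF.hasDerivAt.fun_pow 2).fun_mul (hψ.hasDerivAt.fun_mul hψ'.hasDerivAt)).congr_deriv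
    (by norm_num)

theorem integrable_sq_add_sq_of_integrable_sq_add_mul_sq {α : Type*} [MeasurableSpace α]
    {μ : Measure α} {p q : α → ℝ} {δ : ℝ} (hδ : 0 < δ) (hp : AEStronglyMeasurable p μ)
    (hq : AEStronglyMeasurable q μ) (h : Integrable (fun x => p x ^ 2 + δ * q x ^ 2) μ) :
    Integrable (fun x => p x ^ 2 + q x ^ 2) μ := by
  refine (h.const_mul (1 + δ⁻¹)).mono' ((hp.pow 2).add (hq.pow 2)) (ae_of_all _ fun x => ?_)
  have hexpand : (1 + δ⁻¹) * (p x ^ 2 + δ * q x ^ 2) =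
      p x ^ 2 + q x ^ 2 + (δ⁻¹ * p x ^ 2 + δ * q x ^ 2) := by
    field_simp
    ring
  rw [Real.norm_of_nonneg (by positivity), hexpand]
  linarith [show 0 ≤ δ⁻¹ * p x ^ 2 + δ * q x ^ 2 by positivity]

theorem agmon_sobolev_halfline_general (a : ℝ) (V : ℝ → ℝ)
    (E δ : ℝ) (hδ : 0 < δ) (ψ F : ℝ → ℝ)
    (hψC2 : ContDiffOn ℝ 2 ψ (Set.Ici a)) (hψpos : ∀ x ≥ a, 0 < ψ x)
    (hsub : ∀ x ≥ a, (V x - E) * ψ x ≤ deriv (deriv ψ) x)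
    (hψL2 : IntegrableOn (fun x => (ψ x) ^ 2) (Set.Ici a))
    (hFC1 : ContDiffOn ℝ 1 F (Set.Ici a)) (hFpos : ∀ x ≥ a, 0 < F x)
    (hconstraint : ∀ x ≥ a, δ ≤ V x - E - (deriv F x / F x) ^ 2) :
    ∀ b > a,
      IntegrableOn
        (fun x => (deriv (fun y => F y * ψ y) x) ^ 2 + (F x * ψ x) ^ 2)
        (Set.Ici b) := by
  intro b hb
  have hIci : Ici b ⊆ Ioi a := Ici_subset_Ioi.mpr hb
  have hIoi : Ioi b ⊆ Ioi a := Ioi_subset_Ioi hb.le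
  have hψd : DifferentiableOn ℝ ψ (Ioi a) :=
    (hψC2.differentiableOn two_ne_zero).mono Ioi_subset_Ici_self
  have hψ'd : DifferentiableOn ℝ (deriv ψ) (Ioi a) :=
    ((hψC2.mono Ioi_subset_Ici_self).deriv_of_isOpen isOpen_Ioi (m := 1) le_rfl).differentiableOn
      one_ne_zero
  have hFd : DifferentiableOn ℝ F (Ioi a) :=
    (hFC1.differentiableOn one_ne_zero).mono Ioi_subset_Ici_self
  have hu : ContDiffOn ℝ 1 (fun y => F y * ψ y) (Ioi a) :=
    (hFC1.mul (hψC2.of_le one_le_two)).mono Ioi_subset_Ici_self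
  have hψ'₀ : ∀ x ∈ Ioi a, deriv ψ x ≤ 0 := by
    refine fun x hx => deriv_nonpos_of_deriv_deriv_nonneg_of_integrableOn_sq hψd hψ'd
      (fun y hy => ?_) (fun y hy => hψpos y hy.le) (hψL2.mono_set Ioi_subset_Ici_self) hx
    have hVE : 0 ≤ V y - E := by linarith [hconstraint y hy.le, sq_nonneg (deriv F y / F y)]
    exact (mul_nonneg hVE (hψpos y hy.le).le).trans (hsub y hy.le)
  have hG : ∀ x ∈ Ioi a, HasDerivAt (fun y => F y ^ 2 * (ψ y * deriv ψ y)) _ x := fun x hx =>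
    hasDerivAt_sq_mul_mul_deriv (hFd.differentiableAt (Ioi_mem_nhds hx))
      (hψd.differentiableAt (Ioi_mem_nhds hx)) (hψ'd.differentiableAt (Ioi_mem_nhds hx))
  have hu'c := (hu.continuousOn_deriv_of_isOpen isOpen_Ioi le_rfl).mono hIci
  have huc := hu.continuousOn.mono hIci
  have hg : IntegrableOn
      (fun x => (deriv (fun y => F y * ψ y) x) ^ 2 + δ * (F x * ψ x) ^ 2) (Ici b) := by
    refine integrableOn_Ici_of_nonneg_of_le_deriv
      ((hu'c.pow 2).add (continuousOn_const.mul (huc.pow 2))) (fun x _ => by positivity)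
      (fun x hx => (hG x (hIci hx)).continuousAt.continuousWithinAt)
      (fun x hx => hG x (hIoi hx)) (fun x hx => ?_) (M := 0) fun x hx => ?_
    · exact agmon_pointwise (hFd.differentiableAt (Ioi_mem_nhds (hIoi hx)))
        (hψd.differentiableAt (Ioi_mem_nhds (hIoi hx))) (hFpos x (hIoi hx).le)
        (hψpos x (hIoi hx).le).le (hsub x (hIoi hx).le) (hconstraint x (hIoi hx).le)
    · exact mul_nonpos_of_nonneg_of_nonpos (sq_nonneg _) (mul_nonpos_of_nonneg_of_nonpos
        (hψpos x (hIoi hx).le).le (hψ'₀ x (hIoi hx)))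
  exact integrable_sq_add_sq_of_integrable_sq_add_mul_sq hδ
    (hu'c.aestronglyMeasurable measurableSet_Ici) (huc.aestronglyMeasurable measurableSet_Ici) hg

/-- Half-line case of the key Sobolev estimate (Proposition 1.1): for a positive
square-integrable subsolution `ψ` of `−ψ'' + Vψ = Eψ` on `[a,∞)` and an Agmon
multiplier `F > 0` with `V − E − (F'/F)² ≥ δ > 0`, the product `Fψ` has finite `H¹`
norm on `[b,∞)` for every `b > a`. -/
theorem agmon_sobolev_halfline (a : ℝ) (V : ℝ → ℝ) (hV : ContinuousOn V (Set.Ici a))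
    (E δ : ℝ) (hδ : 0 < δ) (ψ F : ℝ → ℝ)
    (hψC2 : ContDiffOn ℝ 2 ψ (Set.Ici a)) (hψpos : ∀ x ≥ a, 0 < ψ x)
    (hsub : ∀ x ≥ a, (V x - E) * ψ x ≤ deriv (deriv ψ) x)
    (hψL2 : IntegrableOn (fun x => (ψ x) ^ 2) (Set.Ici a))
    (hFC1 : ContDiffOn ℝ 1 F (Set.Ici a)) (hFpos : ∀ x ≥ a, 0 < F x)
    (hconstraint : ∀ x ≥ a, δ ≤ V x - E - (deriv F x / F x) ^ 2) :
    ∀ b > a,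
      IntegrableOn
        (fun x => (deriv (fun y => F y * ψ y) x) ^ 2 + (F x * ψ x) ^ 2)
        (Set.Ici b) :=
  agmon_sobolev_halfline_general a V E δ hδ ψ F hψC2 hψpos hsub hψL2 hFC1 hFpos hconstraint
end

section
/- Let a ∈ ℝ, V : [a,∞) → ℝ continuous, E ∈ ℝ, and suppose liminf_{x→∞}(V(x) − E) > 0. Let ψ : [a,∞) → ℝ be twice continuously differentiable, square-integrable on [a,∞), and satisfy −ψ''(x) + V(x)ψ(x) = Eψ(x) for all x ≥ a. Then for every δ with 0 < δ < liminf_{x→∞}(V(x) − E), setting ρ(x) := ∫_a^x ( max(V(t) − E − δ, 0) )^{1/2} dt, the function x ↦ e^{ρ(x)}ψ(x) is bounded on [a,∞), and both e^{ρ}ψ and its derivative are square-integrable on [a,∞). -/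
/-!
Choose `b > a` with `V - E ≥ δ` on `[b, ∞)`; there `ρ' = q` with `q² = V - E - δ`. Agmon's
identity says that the flux `G = e^{2ρ} ψ ψ'` satisfies `G' = ((e^ρ ψ)')² + δ (e^ρ ψ)² ≥ 0`.
Moreover `ψ ψ'` is nondecreasing on `[b, ∞)` (its derivative is `ψ'² + (V - E) ψ²`), so if it
were positive somewhere then `ψ²` would grow linearly, contradicting `ψ ∈ L²`; hence `G ≤ 0`.
Integrating `G'` over `[b, x]` bounds the `L²` norms of `e^ρ ψ` and of its derivative on
`[b, ∞)` by `-G(b)`, and the one-dimensional Sobolev bound `f(x)² ≤ f(b)² + ‖f‖²_{H¹}` gives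
boundedness. On the compact interval `[a, b]` everything is continuous.
-/

open MeasureTheory Set Filter Real Topology

section HalfLine

variable {a b : ℝ}

theorem not_integrableOn_Ici_of_tendsto_atTop {u : ℝ → ℝ} (hu : Tendsto u atTop atTop) :
    ¬ IntegrableOn u (Ici b) := by
  intro hint
  obtain ⟨c, hc⟩ := eventually_atTop.1 (hu.eventually_ge_atTop 1)
  have hone : IntegrableOn (fun _ => (1 : ℝ)) (Ici (max b c)) :=
    (hint.mono_set (Ici_subset_Ici.2 (le_max_left b c))).mono' aestronglyMeasurable_const
      (ae_restrict_of_forall_mem measurableSet_Ici fun y hy => by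
        simpa using hc y ((le_max_right b c).trans hy))
  simp [integrableOn_const_iff] at hone

theorem nonpos_of_hasDerivAt_of_monotoneOn_of_integrableOn_Ici {u u' : ℝ → ℝ}
    (hu : ∀ x ∈ Ici b, HasDerivAt u (u' x) x) (hu' : MonotoneOn u' (Ici b))
    (hint : IntegrableOn u (Ici b)) {x : ℝ} (hx : x ∈ Ici b) : u' x ≤ 0 := by
  by_contra! hpos
  have hsub : Ici x ⊆ Ici b := Ici_subset_Ici.2 hx
  have hgrow : MonotoneOn (fun y => u y - u' x * y) (Ici x) := by
    have hd : ∀ y ∈ Ici x, HasDerivAt (fun y => u y - u' x * y) (u' y - u' x) y := fun y hy => by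
      simpa using (hu y (hsub hy)).fun_sub ((hasDerivAt_id y).const_mul (u' x))
    refine monotoneOn_of_hasDerivWithinAt_nonneg (convex_Ici x)
      (continuousOn_of_forall_continuousAt fun y hy => (hd y hy).continuousAt)
      (fun y hy => (hd y (interior_subset hy)).hasDerivWithinAt) fun y hy => ?_
    exact sub_nonneg.2 (hu' hx (hsub (interior_subset hy)) (interior_subset hy))
  refine not_integrableOn_Ici_of_tendsto_atTop ?_ hint
  refine tendsto_atTop_mono' atTop ?_
    (tendsto_atTop_add_const_left _ (u x - u' x * x) (tendsto_id.const_mul_atTop hpos))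
  filter_upwards [eventually_ge_atTop x] with y hy
  simp only [id]
  linarith [hgrow self_mem_Ici hy hy]

theorem mul_nonpos_of_sq_integrableOn_Ici {ψ ψ' W : ℝ → ℝ}
    (hψ : ∀ x ∈ Ici b, HasDerivAt ψ (ψ' x) x) (hψ' : ∀ x ∈ Ici b, HasDerivAt ψ' (W x * ψ x) x)
    (hW : ∀ x ∈ Ici b, 0 ≤ W x) (hint : IntegrableOn (fun x => ψ x ^ 2) (Ici b))
    {x : ℝ} (hx : x ∈ Ici b) : ψ x * ψ' x ≤ 0 := by
  have hsq : ∀ y ∈ Ici b, HasDerivAt (fun y => ψ y ^ 2) (2 * (ψ y * ψ' y)) y := fun y hy =>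
    ((hψ y hy).fun_pow 2).congr_deriv (by norm_num; ring)
  have hprod : ∀ y ∈ Ici b,
      HasDerivAt (fun y => 2 * (ψ y * ψ' y)) (2 * (ψ' y ^ 2 + W y * ψ y ^ 2)) y := fun y hy =>
    (((hψ y hy).mul (hψ' y hy)).const_mul 2).congr_deriv (by ring)
  have hmono : MonotoneOn (fun y => 2 * (ψ y * ψ' y)) (Ici b) :=
    monotoneOn_of_hasDerivWithinAt_nonneg (convex_Ici b)
      (continuousOn_of_forall_continuousAt fun y hy => (hprod y hy).continuousAt)
      (fun y hy => (hprod y (interior_subset hy)).hasDerivWithinAt) fun y hy => by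
        have := hW y (interior_subset hy); positivity
  linarith [nonpos_of_hasDerivAt_of_monotoneOn_of_integrableOn_Ici hsq hmono hint hx]

theorem integrableOn_Ioi_deriv_of_nonneg_of_le {g g' : ℝ → ℝ} {C : ℝ}
    (hderiv : ∀ x ∈ Ici b, HasDerivAt g (g' x) x) (hpos : ∀ x ∈ Ici b, 0 ≤ g' x)
    (hle : ∀ x ∈ Ici b, g x ≤ C) : IntegrableOn g' (Ioi b) := by
  have hcont : ContinuousOn g (Ici b) :=
    continuousOn_of_forall_continuousAt fun x hx => (hderiv x hx).continuousAt
  have hint : ∀ x, IntegrableOn g' (Ioc b x) := fun x =>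
    intervalIntegral.integrableOn_deriv_of_nonneg (hcont.mono Icc_subset_Ici_self)
      (fun y hy => hderiv y hy.1.le) fun y hy => hpos y hy.1.le
  refine integrableOn_Ioi_of_intervalIntegral_norm_bounded (C - g b) b hint tendsto_id ?_
  filter_upwards [eventually_ge_atTop b] with x hx
  have hftc : ∫ y in b..x, g' y = g x - g b :=
    intervalIntegral.integral_eq_sub_of_hasDerivAt_of_le hx (hcont.mono Icc_subset_Ici_self)
      (fun y hy => hderiv y hy.1.le) ((intervalIntegrable_iff_integrableOn_Ioc_of_le hx).2 (hint x))
  calc ∫ y in b..x, ‖g' y‖ = ∫ y in b..x, g' y :=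
        intervalIntegral.integral_congr fun y hy => by
          rw [uIcc_of_le hx] at hy; exact norm_of_nonneg (hpos y hy.1)
    _ ≤ C - g b := by linarith [hle x hx]

theorem integrableOn_Ioi_agmon_energy {ψ ψ' W ρ q : ℝ → ℝ} {δ : ℝ}
    (hψ : ∀ x ∈ Ici b, HasDerivAt ψ (ψ' x) x) (hψ' : ∀ x ∈ Ici b, HasDerivAt ψ' (W x * ψ x) x)
    (hρ : ∀ x ∈ Ici b, HasDerivAt ρ (q x) x) (hq : ∀ x ∈ Ici b, q x ^ 2 + δ = W x) (hδ : 0 < δ)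
    (hint : IntegrableOn (fun x => ψ x ^ 2) (Ici b)) :
    IntegrableOn (fun x => (exp (ρ x) * (ψ' x + q x * ψ x)) ^ 2 + δ * (exp (ρ x) * ψ x) ^ 2)
      (Ioi b) := by
  have hflux : ∀ x ∈ Ici b, HasDerivAt (fun y => exp (2 * ρ y) * (ψ y * ψ' y))
      ((exp (ρ x) * (ψ' x + q x * ψ x)) ^ 2 + δ * (exp (ρ x) * ψ x) ^ 2) x := fun x hx =>
    (((hρ x hx).const_mul 2).exp.mul ((hψ x hx).fun_mul (hψ' x hx))).congr_deriv (by
      rw [← hq x hx, mul_comm 2, exp_mul, rpow_two]; ring)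
  refine integrableOn_Ioi_deriv_of_nonneg_of_le hflux (fun x _ => by positivity) (C := 0)
    fun x hx => mul_nonpos_of_nonneg_of_nonpos (exp_pos _).le ?_
  exact mul_nonpos_of_sq_integrableOn_Ici hψ hψ' (fun y hy => by nlinarith [hq y hy]) hint hx

theorem sq_le_of_hasDerivAt_of_integrableOn_Ici {f f' : ℝ → ℝ}
    (hf : ∀ x ∈ Ici b, HasDerivAt f (f' x) x)
    (hint : IntegrableOn (fun x => f x ^ 2 + f' x ^ 2) (Ici b)) {x : ℝ} (hx : x ∈ Ici b) :
    f x ^ 2 ≤ f b ^ 2 + ∫ t in Ici b, (f t ^ 2 + f' t ^ 2) := by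
  have hsq : ∀ y ∈ Ici b, HasDerivAt (fun y => f y ^ 2) (2 * f y * f' y) y := fun y hy =>
    ((hf y hy).fun_pow 2).congr_deriv (by norm_num)
  have hftc : f x ^ 2 - f b ^ 2 ≤ ∫ t in b..x, (f t ^ 2 + f' t ^ 2) :=
    intervalIntegral.sub_le_integral_of_hasDeriv_right_of_le hx
      (continuousOn_of_forall_continuousAt fun y hy => (hsq y hy.1).continuousAt)
      (fun y hy => (hsq y hy.1.le).hasDerivWithinAt) (hint.mono_set Icc_subset_Ici_self)
      fun y _ => by nlinarith [sq_nonneg (f y - f' y)]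
  have hmono : ∫ t in b..x, (f t ^ 2 + f' t ^ 2) ≤ ∫ t in Ici b, (f t ^ 2 + f' t ^ 2) := by
    rw [intervalIntegral.integral_of_le hx]
    exact setIntegral_mono_set hint (ae_of_all _ fun t => by positivity)
      (Ioc_subset_Icc_self.trans Icc_subset_Ici_self).eventuallyLE
  linarith

theorem exists_abs_le_of_hasDerivAt_of_integrableOn_Ici {f f' : ℝ → ℝ}
    (hc : ContinuousOn f (Icc a b)) (hf : ∀ x ∈ Ici b, HasDerivAt f (f' x) x)
    (hint : IntegrableOn (fun x => f x ^ 2 + f' x ^ 2) (Ici b)) : ∃ C, ∀ x ≥ a, |f x| ≤ C := by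
  obtain ⟨C, hC⟩ := isCompact_Icc.exists_bound_of_continuousOn hc
  refine ⟨max C √(f b ^ 2 + ∫ t in Ici b, (f t ^ 2 + f' t ^ 2)), fun x hx => ?_⟩
  rcases le_total x b with hxb | hbx
  · exact le_max_of_le_left (hC x ⟨hx, hxb⟩)
  · exact le_max_of_le_right (abs_le_sqrt (sq_le_of_hasDerivAt_of_integrableOn_Ici hf hint hbx))

theorem integrableOn_sq_of_integrableOn_sq_add_mul_sq {α : Type*} [MeasurableSpace α]
    {μ : Measure α} {f g : α → ℝ} {s : Set α} {δ : ℝ} (hδ : 0 < δ)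
    (hf : AEStronglyMeasurable f (μ.restrict s)) (hg : AEStronglyMeasurable g (μ.restrict s))
    (h : IntegrableOn (fun x => f x ^ 2 + δ * g x ^ 2) s μ) :
    IntegrableOn (fun x => f x ^ 2) s μ ∧ IntegrableOn (fun x => g x ^ 2) s μ := by
  refine ⟨h.mono' (hf.pow 2) (ae_of_all _ fun x => ?_),
    (h.div_const δ).mono' (hg.pow 2) (ae_of_all _ fun x => ?_)⟩
  · rw [norm_of_nonneg (sq_nonneg _)]
    nlinarith [sq_nonneg (g x)]
  · rw [norm_of_nonneg (sq_nonneg _), le_div_iff₀ hδ]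
    nlinarith [sq_nonneg (f x)]

theorem integrableOn_Ici_of_continuousOn_Icc {μ : Measure ℝ} [IsLocallyFiniteMeasure μ]
    {f : ℝ → ℝ} (hab : a ≤ b) (hc : ContinuousOn f (Icc a b))
    (h : IntegrableOn f (Ioi b) μ) : IntegrableOn f (Ici a) μ := by
  rw [← Icc_union_Ioi_eq_Ici hab]
  exact hc.integrableOn_Icc.union h

theorem exists_abs_le_and_integrableOn_sq_Ici {f f' : ℝ → ℝ} {δ : ℝ} (hab : a < b) (hδ : 0 < δ)
    (hf : ContinuousOn f (Ici a)) (hf' : ContinuousOn f' (Ici a))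
    (hderiv : ∀ x ∈ Ioi a, HasDerivAt f (f' x) x)
    (hint : IntegrableOn (fun x => f' x ^ 2 + δ * f x ^ 2) (Ioi b)) :
    (∃ C, ∀ x ≥ a, |f x| ≤ C) ∧ IntegrableOn (fun x => f x ^ 2) (Ici a) ∧
      IntegrableOn (fun x => deriv f x ^ 2) (Ici a) := by
  have hIoi : Ioi b ⊆ Ici a := fun x hx => hab.le.trans hx.le
  obtain ⟨hf'L2, hfL2⟩ := integrableOn_sq_of_integrableOn_sq_add_mul_sq hδ
    ((hf'.mono hIoi).aestronglyMeasurable measurableSet_Ioi)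
    ((hf.mono hIoi).aestronglyMeasurable measurableSet_Ioi) hint
  refine ⟨exists_abs_le_of_hasDerivAt_of_integrableOn_Ici (hf.mono Icc_subset_Ici_self)
      (fun x hx => hderiv x (hab.trans_le hx))
      ((integrableOn_Ici_iff_integrableOn_Ioi).2 (hfL2.add hf'L2)),
    integrableOn_Ici_of_continuousOn_Icc hab.le ((hf.mono Icc_subset_Ici_self).pow 2) hfL2, ?_⟩
  rw [integrableOn_Ici_iff_integrableOn_Ioi]
  refine ((integrableOn_Ici_of_continuousOn_Icc hab.le ((hf'.mono Icc_subset_Ici_self).pow 2)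
    hf'L2).mono_set Ioi_subset_Ici_self).congr_fun (fun x hx => ?_) measurableSet_Ioi
  simp only [Pi.pow_apply, (hderiv x hx).deriv]

theorem hasDerivAt_primitive_of_continuousOn_Ici {q : ℝ → ℝ} (hq : ContinuousOn q (Ici a)) {x : ℝ}
    (hx : a < x) : HasDerivAt (fun x => ∫ t in a..x, q t) (q x) x :=
  intervalIntegral.integral_hasDerivAt_right
    (hq.mono (by rw [uIcc_of_le hx.le]; exact Icc_subset_Ici_self)).intervalIntegrable
    ((hq.mono Ioi_subset_Ici_self).stronglyMeasurableAtFilter isOpen_Ioi x hx)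
    (hq.continuousAt (Ici_mem_nhds hx))

theorem continuousOn_primitive_of_continuousOn_Ici {q : ℝ → ℝ} (hq : ContinuousOn q (Ici a)) :
    ContinuousOn (fun x => ∫ t in a..x, q t) (Ici a) := by
  intro x hx
  have hIcc : uIcc a (x + 1) = Icc a (x + 1) := uIcc_of_le (by linarith [mem_Ici.1 hx])
  have hcont := intervalIntegral.continuousOn_primitive_interval (μ := volume)
    ((hq.mono (hIcc ▸ Icc_subset_Ici_self)).integrableOn_compact isCompact_uIcc)
  refine (hcont x (hIcc ▸ ⟨hx, by linarith⟩)).mono_of_mem_nhdsWithin ?_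
  rw [hIcc, ← Ici_inter_Iic]
  exact inter_mem_nhdsWithin _ (Iic_mem_nhds (by linarith))

theorem DifferentiableOn.hasDerivAt_of_Ici {f : ℝ → ℝ} (hf : DifferentiableOn ℝ f (Ici a))
    {x : ℝ} (hx : a < x) : HasDerivAt f (derivWithin f (Ici a) x) x := by
  rw [derivWithin_of_mem_nhds (Ici_mem_nhds hx)]
  exact (hf.differentiableAt (Ici_mem_nhds hx)).hasDerivAt

theorem ContDiffOn.hasDerivAt_derivWithin_Ici {f : ℝ → ℝ} (hf : ContDiffOn ℝ 2 f (Ici a))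
    {x : ℝ} (hx : a < x) : HasDerivAt (derivWithin f (Ici a)) (deriv (deriv f) x) x := by
  have hd : DifferentiableOn ℝ (deriv f) (Ioi a) :=
    ((hf.mono Ioi_subset_Ici_self).deriv_of_isOpen isOpen_Ioi le_rfl).differentiableOn one_ne_zero
  exact (hd.differentiableAt (Ioi_mem_nhds hx)).hasDerivAt.congr_of_eventuallyEq
    (eventually_of_mem (Ioi_mem_nhds hx) fun y hy => derivWithin_of_mem_nhds (Ici_mem_nhds hy))

end HalfLine

/-- Half-line case of Theorem 1.2: for an `L²` solution `ψ` of `−ψ'' + Vψ = Eψ` on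
`[a,∞)` and any `δ` with `0 < δ < liminf_{x→∞}(V(x) − E)` (the condition
`δ < liminf (V − E)` is expressed as: there is `m > δ` with `V x − E ≥ m` eventually),
setting `ρ(x) = ∫_a^x ((V(t) − E − δ)₊)^{1/2} dt`, the function `e^ρ ψ` is bounded and
both it and its derivative are square-integrable on `[a,∞)`. -/
theorem agmon_classical_action_halfline (a : ℝ) (V : ℝ → ℝ)
    (hV : ContinuousOn V (Set.Ici a)) (E : ℝ)
    (ψ : ℝ → ℝ) (hψC2 : ContDiffOn ℝ 2 ψ (Set.Ici a))
    (hψL2 : IntegrableOn (fun x => (ψ x) ^ 2) (Set.Ici a))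
    (heq : ∀ x ≥ a, -(deriv (deriv ψ) x) + V x * ψ x = E * ψ x)
    (δ : ℝ) (hδ : 0 < δ)
    (hδliminf : ∃ m, δ < m ∧ ∀ᶠ x in Filter.atTop, m ≤ V x - E)
    (ρ : ℝ → ℝ)
    (hρ : ρ = fun x => ∫ t in a..x, Real.sqrt (max (V t - E - δ) 0)) :
    (∃ C : ℝ, ∀ x ≥ a, |Real.exp (ρ x) * ψ x| ≤ C) ∧
    IntegrableOn (fun x => (Real.exp (ρ x) * ψ x) ^ 2) (Set.Ici a) ∧
    IntegrableOn (fun x => (deriv (fun y => Real.exp (ρ y) * ψ y) x) ^ 2)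
      (Set.Ici a) := by
  obtain ⟨m, hδm, hev⟩ := hδliminf
  obtain ⟨b, hab, hb⟩ : ∃ b, a < b ∧ ∀ x ∈ Ici b, δ ≤ V x - E := by
    obtain ⟨c, hc⟩ := eventually_atTop.1 hev
    exact ⟨max (a + 1) c, by linarith [le_max_left (a + 1) c],
      fun x hx => hδm.le.trans (hc x (le_of_max_le_right hx))⟩
  set q : ℝ → ℝ := fun t => √(max (V t - E - δ) 0) with hq_def
  have hqc : ContinuousOn q (Ici a) :=
    (((hV.sub continuousOn_const).sub continuousOn_const).sup continuousOn_const).sqrt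
  have hq : ∀ x ∈ Ici b, q x ^ 2 + δ = V x - E := fun x hx => by
    rw [hq_def, sq_sqrt (le_max_right _ _), max_eq_left (by linarith [hb x hx])]
    ring
  -- `deriv ψ a` is a junk value; the one-sided derivative is continuous up to `a`.
  set ψ₁ := derivWithin ψ (Ici a)
  set Φ₁ : ℝ → ℝ := fun x => exp (ρ x) * (ψ₁ x + q x * ψ x)
  have hρ' : ∀ x ∈ Ioi a, HasDerivAt ρ (q x) x := fun x hx =>
    hρ ▸ hasDerivAt_primitive_of_continuousOn_Ici hqc hx
  have hψ' : ∀ x ∈ Ioi a, HasDerivAt ψ (ψ₁ x) x := fun x hx =>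
    (hψC2.differentiableOn two_ne_zero).hasDerivAt_of_Ici hx
  have hψ₁' : ∀ x ∈ Ioi a, HasDerivAt ψ₁ ((V x - E) * ψ x) x := fun x hx =>
    (hψC2.hasDerivAt_derivWithin_Ici hx).congr_deriv (by linear_combination -heq x hx.le)
  have hΦ' : ∀ x ∈ Ioi a, HasDerivAt (fun y => exp (ρ y) * ψ y) (Φ₁ x) x := fun x hx =>
    ((hρ' x hx).exp.mul (hψ' x hx)).congr_deriv (by ring)
  have hρc : ContinuousOn ρ (Ici a) := hρ ▸ continuousOn_primitive_of_continuousOn_Ici hqc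
  have hΦ₁c : ContinuousOn Φ₁ (Ici a) := hρc.rexp.mul
    ((hψC2.continuousOn_derivWithin (uniqueDiffOn_Ici a) one_le_two).add
      (hqc.mul hψC2.continuousOn))
  exact exists_abs_le_and_integrableOn_sq_Ici hab hδ (hρc.rexp.mul hψC2.continuousOn) hΦ₁c hΦ'
    (integrableOn_Ioi_agmon_energy (fun x hx => hψ' x (hab.trans_le hx))
      (fun x hx => hψ₁' x (hab.trans_le hx)) (fun x hx => hρ' x (hab.trans_le hx)) hq hδ
      (hψL2.mono_set (Ici_subset_Ici.2 hab.le)))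
end

section
/- Let a ∈ ℝ, V : [a,∞) → ℝ continuous with V(x) − E > 0 for all x ≥ a, where E ∈ ℝ. If ψ₁ and ψ₂ are twice continuously differentiable functions on [a,∞), both square-integrable on [a,∞), and both satisfying −ψ'' + Vψ = Eψ on [a,∞), then ψ₁ and ψ₂ are linearly dependent: there exist real constants c₁, c₂, not both zero, with c₁ψ₁(x) + c₂ψ₂(x) = 0 for all x ≥ a. -/
/-!
With `q = V − E ≥ 0`, a solution of `ψ'' = q ψ` satisfies `(ψ²)'' = 2 (ψ'² + q ψ²) ≥ 0`, so `ψ²`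
is convex. A convex function that is integrable on `[a, ∞)` is nonincreasing there, since otherwise
it grows at least linearly. Hence an `L²` solution vanishing at `a` vanishes identically; apply this
to `ψ₂(a) ψ₁ − ψ₁(a) ψ₂`, which is again an `L²` solution and vanishes at `a`.
-/

open MeasureTheory Set Filter Topology

theorem not_integrableOn_Ici_of_eventually_le {f : ℝ → ℝ} {a ε : ℝ} (hε : 0 < ε)
    (hf : ∀ᶠ x in atTop, ε ≤ f x) : ¬ IntegrableOn f (Ici a) := by
  intro hint
  obtain ⟨b, hb⟩ := eventually_atTop.1 hf
  have hconst : IntegrableOn (fun _ => ε) (Ici (max a b)) := by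
    refine (hint.mono_set (Ici_subset_Ici.2 (le_max_left a b))).mono' aestronglyMeasurable_const ?_
    filter_upwards [ae_restrict_mem measurableSet_Ici] with x hx
    rw [Real.norm_eq_abs, abs_of_pos hε]
    exact hb x ((le_max_right a b).trans hx)
  simp [integrableOn_const_iff, hε.ne'] at hconst

theorem ConvexOn.antitoneOn_of_integrableOn_Ici {f : ℝ → ℝ} {a : ℝ}
    (hf : ConvexOn ℝ (Ici a) f) (hint : IntegrableOn f (Ici a)) : AntitoneOn f (Ici a) := by
  intro x hx y hy hxy
  by_contra! hlt
  have hxy' : x < y := hxy.lt_of_ne (by rintro rfl; exact hlt.false)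
  set s := (f y - f x) / (y - x)
  have hs : 0 < s := div_pos (sub_pos.2 hlt) (sub_pos.2 hxy')
  have hgrowth : ∀ z > y, f y + s * (z - y) ≤ f z := fun z hz => by
    have := hf.slope_mono_adjacent hx (hy.trans hz.le : z ∈ Ici a) hxy' hz
    rw [le_div_iff₀ (sub_pos.2 hz)] at this
    linarith
  refine not_integrableOn_Ici_of_eventually_le one_pos ?_ hint
  filter_upwards [eventually_gt_atTop y, eventually_ge_atTop (y + (1 - f y) / s)] with z hzy hz
  have : 1 - f y ≤ s * (z - y) := (div_le_iff₀' hs).1 (by linarith)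
  linarith [hgrowth z hzy]

theorem convexOn_sq_of_hasDerivAt_nonneg_mul {D : Set ℝ} (hD : Convex ℝ D) {ψ ψ' q : ℝ → ℝ}
    (hψ : ContinuousOn ψ D) (hψ' : ∀ x ∈ interior D, HasDerivAt ψ (ψ' x) x)
    (hψ'' : ∀ x ∈ interior D, HasDerivAt ψ' (q x * ψ x) x) (hq : ∀ x ∈ interior D, 0 ≤ q x) :
    ConvexOn ℝ D (fun x => ψ x ^ 2) := by
  refine convexOn_of_hasDerivWithinAt2_nonneg hD (hψ.pow 2)
    (f' := fun x => 2 * (ψ x * ψ' x)) (f'' := fun x => 2 * (ψ' x ^ 2 + q x * ψ x ^ 2))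
    (fun x hx => ?_) (fun x hx => ?_) (fun x hx => by have := hq x hx; positivity)
  · exact ((hψ' x hx).fun_pow 2).hasDerivWithinAt.congr_deriv (by ring)
  · exact (((hψ' x hx).fun_mul (hψ'' x hx)).const_mul 2).hasDerivWithinAt.congr_deriv (by ring)

theorem ContDiffOn.hasDerivAt_deriv {𝕜 F : Type*} [NontriviallyNormedField 𝕜]
    [NormedAddCommGroup F] [NormedSpace 𝕜 F] {f : 𝕜 → F} {s : Set 𝕜} {x : 𝕜}
    (hf : ContDiffOn 𝕜 2 f s) (hx : s ∈ 𝓝 x) : HasDerivAt (deriv f) (deriv (deriv f) x) x :=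
  (((hf.contDiffAt hx).derivWithin (m := 1) le_rfl).differentiableAt one_ne_zero).hasDerivAt

theorem integrable_sq_linear_combination {α : Type*} [MeasurableSpace α] {μ : Measure α}
    {f g : α → ℝ} (hf : AEStronglyMeasurable f μ) (hg : AEStronglyMeasurable g μ)
    (hf2 : Integrable (fun x => f x ^ 2) μ) (hg2 : Integrable (fun x => g x ^ 2) μ) (c₁ c₂ : ℝ) :
    Integrable (fun x => (c₁ * f x + c₂ * g x) ^ 2) μ :=
  ((((memLp_two_iff_integrable_sq hf).2 hf2).const_mul c₁).add
    (((memLp_two_iff_integrable_sq hg).2 hg2).const_mul c₂)).integrable_sq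

theorem eq_zero_of_hasDerivAt_of_integrableOn_sq {ψ ψ' q : ℝ → ℝ} {a : ℝ}
    (hψ : ContinuousOn ψ (Ici a)) (hψ' : ∀ x > a, HasDerivAt ψ (ψ' x) x)
    (hψ'' : ∀ x > a, HasDerivAt ψ' (q x * ψ x) x) (hq : ∀ x > a, 0 ≤ q x)
    (hL2 : IntegrableOn (fun x => ψ x ^ 2) (Ici a)) (ha : ψ a = 0) : ∀ x ≥ a, ψ x = 0 := by
  have hconvex : ConvexOn ℝ (Ici a) (fun x => ψ x ^ 2) := by
    refine convexOn_sq_of_hasDerivAt_nonneg_mul (ψ' := ψ') (q := q) (convex_Ici a) hψ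
      ?_ ?_ ?_ <;> rw [interior_Ici]
    exacts [hψ', hψ'', hq]
  intro x hx
  simpa [ha] using hconvex.antitoneOn_of_integrableOn_Ici hL2 self_mem_Ici hx hx

theorem linear_combination_eq_zero_of_eq_zero_at_endpoint {ψ₁ ψ₂ q : ℝ → ℝ} {a : ℝ}
    (hq : ∀ x > a, 0 ≤ q x) (hψ₁ : ContDiffOn ℝ 2 ψ₁ (Ici a)) (hψ₂ : ContDiffOn ℝ 2 ψ₂ (Ici a))
    (hψ₁L2 : IntegrableOn (fun x => ψ₁ x ^ 2) (Ici a))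
    (hψ₂L2 : IntegrableOn (fun x => ψ₂ x ^ 2) (Ici a))
    (heq₁ : ∀ x > a, deriv (deriv ψ₁) x = q x * ψ₁ x)
    (heq₂ : ∀ x > a, deriv (deriv ψ₂) x = q x * ψ₂ x)
    (c₁ c₂ : ℝ) (ha : c₁ * ψ₁ a + c₂ * ψ₂ a = 0) : ∀ x ≥ a, c₁ * ψ₁ x + c₂ * ψ₂ x = 0 := by
  have hderiv {ψ : ℝ → ℝ} (hψ : ContDiffOn ℝ 2 ψ (Ici a)) (x : ℝ) (hx : x > a) :
      HasDerivAt ψ (deriv ψ x) x :=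
    ((hψ.contDiffAt (Ici_mem_nhds hx)).differentiableAt two_ne_zero).hasDerivAt
  refine eq_zero_of_hasDerivAt_of_integrableOn_sq (q := q)
    (ψ' := fun x => c₁ * deriv ψ₁ x + c₂ * deriv ψ₂ x)
    ((contDiffOn_const.mul hψ₁).add (contDiffOn_const.mul hψ₂)).continuousOn
    (fun x hx => ((hderiv hψ₁ x hx).const_mul c₁).add ((hderiv hψ₂ x hx).const_mul c₂))
    (fun x hx => ?_) hq ?_ ha
  · have := ((hψ₁.hasDerivAt_deriv (Ici_mem_nhds hx)).const_mul c₁).add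
      ((hψ₂.hasDerivAt_deriv (Ici_mem_nhds hx)).const_mul c₂)
    rw [heq₁ x hx, heq₂ x hx] at this
    exact this.congr_deriv (by ring)
  · exact integrable_sq_linear_combination
      (hψ₁.continuousOn.aestronglyMeasurable measurableSet_Ici)
      (hψ₂.continuousOn.aestronglyMeasurable measurableSet_Ici) hψ₁L2 hψ₂L2 c₁ c₂

theorem L2_solutions_linearly_dependent_general (a : ℝ) (V : ℝ → ℝ)
    (E : ℝ) (hVE : ∀ x ≥ a, 0 < V x - E)
    (ψ₁ ψ₂ : ℝ → ℝ)
    (hψ₁C2 : ContDiffOn ℝ 2 ψ₁ (Set.Ici a))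
    (hψ₂C2 : ContDiffOn ℝ 2 ψ₂ (Set.Ici a))
    (hψ₁L2 : IntegrableOn (fun x => (ψ₁ x) ^ 2) (Set.Ici a))
    (hψ₂L2 : IntegrableOn (fun x => (ψ₂ x) ^ 2) (Set.Ici a))
    (heq₁ : ∀ x ≥ a, -(deriv (deriv ψ₁) x) + V x * ψ₁ x = E * ψ₁ x)
    (heq₂ : ∀ x ≥ a, -(deriv (deriv ψ₂) x) + V x * ψ₂ x = E * ψ₂ x) :
    ∃ c₁ c₂ : ℝ, (c₁ ≠ 0 ∨ c₂ ≠ 0) ∧ ∀ x ≥ a, c₁ * ψ₁ x + c₂ * ψ₂ x = 0 := by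
  have hsecond {ψ : ℝ → ℝ} (h : ∀ x ≥ a, -(deriv (deriv ψ) x) + V x * ψ x = E * ψ x) :
      ∀ x > a, deriv (deriv ψ) x = (V x - E) * ψ x :=
    fun x hx => by linear_combination -h x hx.le
  have hcomb := linear_combination_eq_zero_of_eq_zero_at_endpoint
    (fun x hx => (hVE x hx.le).le) hψ₁C2 hψ₂C2 hψ₁L2 hψ₂L2 (hsecond heq₁) (hsecond heq₂)
  by_cases h : ψ₁ a = 0 ∧ ψ₂ a = 0
  · exact ⟨1, 0, Or.inl one_ne_zero, hcomb 1 0 (by simp [h.1])⟩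
  · refine ⟨ψ₂ a, -ψ₁ a, ?_, hcomb _ _ (by ring)⟩
    by_contra! h'
    exact h ⟨neg_eq_zero.1 h'.2, h'.1⟩

/-- Half-line case of the partitioned uniqueness result (Corollary 2.5): on a
half-line where `V − E > 0`, any two square-integrable solutions of
`−ψ'' + Vψ = Eψ` are linearly dependent. -/
theorem L2_solutions_linearly_dependent (a : ℝ) (V : ℝ → ℝ)
    (hV : ContinuousOn V (Set.Ici a)) (E : ℝ) (hVE : ∀ x ≥ a, 0 < V x - E)
    (ψ₁ ψ₂ : ℝ → ℝ)
    (hψ₁C2 : ContDiffOn ℝ 2 ψ₁ (Set.Ici a))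
    (hψ₂C2 : ContDiffOn ℝ 2 ψ₂ (Set.Ici a))
    (hψ₁L2 : IntegrableOn (fun x => (ψ₁ x) ^ 2) (Set.Ici a))
    (hψ₂L2 : IntegrableOn (fun x => (ψ₂ x) ^ 2) (Set.Ici a))
    (heq₁ : ∀ x ≥ a, -(deriv (deriv ψ₁) x) + V x * ψ₁ x = E * ψ₁ x)
    (heq₂ : ∀ x ≥ a, -(deriv (deriv ψ₂) x) + V x * ψ₂ x = E * ψ₂ x) :
    ∃ c₁ c₂ : ℝ, (c₁ ≠ 0 ∨ c₂ ≠ 0) ∧ ∀ x ≥ a, c₁ * ψ₁ x + c₂ * ψ₂ x = 0 :=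
  L2_solutions_linearly_dependent_general a V E hVE ψ₁ ψ₂ hψ₁C2 hψ₂C2 hψ₁L2 hψ₂L2 heq₁ heq₂
end

section
/- Let b > 1 and k, L > 0 be real numbers, and let T be the 2×2 real matrix with first row (cosh(kL), sinh(kL)) and second row ((1/b)·sinh(kL), (1/b)·cosh(kL)). Then det T = 1/b, trace T = (1 + 1/b)·cosh(kL), (trace T)² > 4·det T, and the number λ₁ := (1/2)(1 + 1/b)cosh(kL) − ( ((1/2)(1 + 1/b)cosh(kL))² − 1/b )^{1/2} is an eigenvalue of T satisfying 0 < λ₁ < 1/(b·cosh(kL)). -/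
set_option maxHeartbeats 1000000


open Matrix

/-- Transfer matrix of the regular tree with branching number `b` and edge length `L`
(Section 4.1): `T = [[cosh kL, sinh kL], [(1/b)sinh kL, (1/b)cosh kL]]` has
`det T = 1/b`, `tr T = (1 + 1/b)cosh kL`, `(tr T)² > 4 det T`, and
`λ₁ = (1/2)(1+1/b)cosh kL − √(((1/2)(1+1/b)cosh kL)² − 1/b)` is an eigenvalue of `T`
with `0 < λ₁ < 1/(b cosh kL)`. -/
theorem regular_tree_transfer_matrix (b k L : ℝ) (hb : 1 < b) (hk : 0 < k)
    (hL : 0 < L)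
    (T : Matrix (Fin 2) (Fin 2) ℝ)
    (hT : T = !![Real.cosh (k * L), Real.sinh (k * L);
                 (1 / b) * Real.sinh (k * L), (1 / b) * Real.cosh (k * L)])
    (lam₁ : ℝ)
    (hlam₁ : lam₁ = (1 / 2) * (1 + 1 / b) * Real.cosh (k * L) -
      Real.sqrt (((1 / 2) * (1 + 1 / b) * Real.cosh (k * L)) ^ 2 - 1 / b)) :
    T.det = 1 / b ∧
    T.trace = (1 + 1 / b) * Real.cosh (k * L) ∧
    (T.trace) ^ 2 > 4 * T.det ∧
    (∃ w : Fin 2 → ℝ, w ≠ 0 ∧ T.mulVec w = lam₁ • w) ∧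
    0 < lam₁ ∧ lam₁ < 1 / (b * Real.cosh (k * L)) := by
  have hb0 : (0:ℝ) < b := lt_trans one_pos hb
  set c := Real.cosh (k * L) with hc
  set s := Real.sinh (k * L) with hs
  have hkL : 0 < k * L := mul_pos hk hL
  have hc1 : 1 < c := by
    rw [hc]; exact (Real.one_lt_cosh).2 (ne_of_gt hkL)
  have hs0 : 0 < s := by rw [hs]; exact Real.sinh_pos_iff.2 hkL
  have hid : c ^ 2 - s ^ 2 = 1 := Real.cosh_sq_sub_sinh_sq (k * L)
  set m := (1 / 2) * (1 + 1 / b) * c with hm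
  have hm0 : 0 < m := by
    have : 0 < 1 + 1 / b := by positivity
    rw [hm]; positivity
  have hdisc : 0 < m ^ 2 - 1 / b := by
    have h1 : m ^ 2 - 1 / b = ((1/2) * (1 - 1/b) * c) ^ 2 + (c ^ 2 - 1) / b := by
      rw [hm]; field_simp; ring
    rw [h1]
    have h2 : 0 < (c ^ 2 - 1) / b := by
      apply div_pos _ hb0; nlinarith
    positivity
  set r := Real.sqrt (m ^ 2 - 1 / b) with hrdef
  have hr0 : 0 ≤ r := Real.sqrt_nonneg _
  have hr2 : r ^ 2 = m ^ 2 - 1 / b := Real.sq_sqrt hdisc.le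
  have hlam : lam₁ = m - r := by rw [hlam₁, hm, hrdef]
  have hdet : T.det = 1 / b := by
    rw [hT, Matrix.det_fin_two_of]
    field_simp
    nlinarith [hid]
  have htr : T.trace = (1 + 1 / b) * c := by
    rw [hT, Matrix.trace_fin_two_of]; ring
  refine ⟨hdet, htr, ?_, ?_, ?_, ?_⟩
  · rw [hdet, htr]
    have : (1 + 1/b)^2 * c^2 - 4 * (1/b) = (1 - 1/b)^2 * c^2 + 4 * (c^2 - 1) / b := by
      field_simp; ring
    nlinarith [sq_nonneg ((1 - 1/b) * c), div_pos (by nlinarith : (0:ℝ) < c^2 - 1) hb0]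
  · -- eigenvector
    refine ⟨![s, lam₁ - c], ?_, ?_⟩
    · intro h
      have := congrFun h 0
      simp at this
      exact absurd this (ne_of_gt hs0)
    · have hchar : lam₁ ^ 2 - 2 * m * lam₁ + 1 / b = 0 := by
        rw [hlam]; nlinarith [hr2]
      funext i
      fin_cases i
      · simp [hT, Matrix.mulVec, dotProduct, Fin.sum_univ_two]
        ring
      · simp [hT, Matrix.mulVec, dotProduct, Fin.sum_univ_two]
        linear_combination (-(1/b)) * hid - hchar - 2 * lam₁ * hm
  · rw [hlam]
    have : r < m := by
      have h1 : r < Real.sqrt (m ^ 2) := by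
        apply Real.sqrt_lt_sqrt hdisc.le
        have : 0 < 1 / b := by positivity
        linarith
      rwa [Real.sqrt_sq hm0.le] at h1
    linarith
  · -- lam₁ < 1/(b c)
    have hmc : c < m + r := by
      have hsq : (c - m) ^ 2 < r ^ 2 := by
        rw [hr2, hm]
        have : m ^ 2 - 1/b - (c - m)^2 = (c^2 - 1) / b := by
          rw [hm]; field_simp; ring
        nlinarith [div_pos (by nlinarith : (0:ℝ) < c^2 - 1) hb0]
      nlinarith
    have hlampos : 0 < lam₁ := by
      rw [hlam]
      have h1 : r < Real.sqrt (m ^ 2) := by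
        apply Real.sqrt_lt_sqrt hdisc.le
        have : 0 < 1 / b := by positivity
        linarith
      rw [Real.sqrt_sq hm0.le] at h1
      linarith
    have hprod : lam₁ * (m + r) = 1 / b := by
      rw [hlam]; nlinarith [hr2]
    have hc0 : 0 < c := lt_trans one_pos hc1
    rw [lt_div_iff₀ (by positivity)]
    calc lam₁ * (b * c) = (lam₁ * c) * b := by ring
      _ < (lam₁ * (m + r)) * b := by
          apply mul_lt_mul_of_pos_right _ hb0
          exact mul_lt_mul_of_pos_left hmc hlampos
      _ = 1 := by rw [hprod]; field_simp
end

section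
/- Let b ≥ 2 and k, L > 0 be real numbers, and set λ₁ := (1/2)(1 + 1/b)cosh(kL) − ( ((1/2)(1 + 1/b)cosh(kL))² − 1/b )^{1/2}. Then b·λ₁² < 1, and consequently the series ∑_{n=0}^∞ bⁿ·λ₁^{2n} converges. -/
/-! `λ₁` is the smaller root of `x² - 2c x + 1/b` with `c = (1/2)(1 + 1/b) cosh kL`, so
`λ₁ λ₂ = 1/b` for the larger root `λ₂`. Since `cosh ≥ 1`, AM-GM gives `c ≥ (1 + 1/b)/2 > 1/√b`
for `b ≠ 1`, so the roots are distinct and `λ₁² < λ₁ λ₂ = 1/b`. The series is then geometric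
with ratio `b λ₁² < 1`. -/

open Real

lemma lt_sq_half_mul_one_add_mul_cosh {u : ℝ} (hu : 0 < u) (hu1 : u ≠ 1) (t : ℝ) :
    u < ((1 / 2) * (1 + u) * cosh t) ^ 2 := by
  have hamgm : u < ((1 + u) / 2) ^ 2 := by
    nlinarith [sq_pos_of_ne_zero (sub_ne_zero.mpr hu1)]
  have hcosh : (1 + u) / 2 ≤ (1 / 2) * (1 + u) * cosh t := by
    nlinarith [one_le_cosh t]
  calc u < ((1 + u) / 2) ^ 2 := hamgm
    _ ≤ ((1 / 2) * (1 + u) * cosh t) ^ 2 := by gcongr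

lemma sub_sqrt_sq_sub_sq_lt {c u : ℝ} (hu : 0 < u) (hc : 0 ≤ c) (huc : u < c ^ 2) :
    (c - √(c ^ 2 - u)) ^ 2 < u := by
  set s := √(c ^ 2 - u)
  have hs_sq : s ^ 2 = c ^ 2 - u := sq_sqrt (by linarith)
  have hs_pos : 0 < s := sqrt_pos.mpr (by linarith)
  have hs_lt : s < c := by nlinarith
  have hvieta : (c - s) * (c + s) = u := by nlinarith
  nlinarith [mul_pos hs_pos (sub_pos.mpr hs_lt)]

lemma summable_pow_mul_pow_two_mul {b x : ℝ} (hb : 0 ≤ b) (hbx : b * x ^ 2 < 1) :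
    Summable (fun n : ℕ => b ^ n * x ^ (2 * n)) := by
  simp_rw [pow_mul, ← mul_pow]
  exact summable_geometric_of_lt_one (by positivity) hbx

theorem regular_tree_L2_general (b k L : ℝ) (hb : 2 ≤ b)
    (lam₁ : ℝ)
    (hlam₁ : lam₁ = (1 / 2) * (1 + 1 / b) * Real.cosh (k * L) -
      Real.sqrt (((1 / 2) * (1 + 1 / b) * Real.cosh (k * L)) ^ 2 - 1 / b)) :
    b * lam₁ ^ 2 < 1 ∧ Summable (fun n : ℕ => b ^ n * lam₁ ^ (2 * n)) := by
  have hb0 : 0 < b := by linarith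
  have hu : 0 < 1 / b := by positivity
  have hu1 : 1 / b ≠ 1 := by rw [Ne, div_eq_one_iff_eq hb0.ne']; linarith
  have hc : 0 ≤ (1 / 2) * (1 + 1 / b) * cosh (k * L) := by positivity
  have hlam_sq : lam₁ ^ 2 < 1 / b := hlam₁ ▸
    sub_sqrt_sq_sub_sq_lt hu hc (lt_sq_half_mul_one_add_mul_cosh hu hu1 (k * L))
  have hmain : b * lam₁ ^ 2 < 1 := by
    rwa [lt_div_iff₀ hb0, mul_comm] at hlam_sq
  exact ⟨hmain, summable_pow_mul_pow_two_mul hb0.le hmain⟩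

/-- Square-integrability of the regular-tree eigenfunction (Section 4.1): for the
smaller transfer-matrix eigenvalue
`λ₁ = (1/2)(1+1/b)cosh kL − √(((1/2)(1+1/b)cosh kL)² − 1/b)` one has `b·λ₁² < 1`,
and consequently `∑ bⁿ λ₁^{2n}` converges. -/
theorem regular_tree_L2 (b k L : ℝ) (hb : 2 ≤ b) (hk : 0 < k) (hL : 0 < L)
    (lam₁ : ℝ)
    (hlam₁ : lam₁ = (1 / 2) * (1 + 1 / b) * Real.cosh (k * L) -
      Real.sqrt (((1 / 2) * (1 + 1 / b) * Real.cosh (k * L)) ^ 2 - 1 / b)) :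
    b * lam₁ ^ 2 < 1 ∧ Summable (fun n : ℕ => b ^ n * lam₁ ^ (2 * n)) :=
  regular_tree_L2_general b k L hb lam₁ hlam₁
end

section
/- Let k, L₁, L₂ > 0 and set c₁ = cosh(kL₁), s₁ = sinh(kL₁), c₂ = cosh(kL₂), s₂ = sinh(kL₂). Then there exists p ∈ (0,1) such that ( p·c₁ − c₁ − ( (c₁ + p·c₁)² − 4p )^{1/2} ) / (2·s₁) = ( (1−p)·c₂ − c₂ − ( (c₂ + (1−p)·c₂)² − 4(1−p) )^{1/2} ) / (2·s₂). (In particular, both expressions under the square roots are nonnegative for every p ∈ [0,1].) -/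
/-- The 2-lengths tree (Section 4.2): with `c_j = cosh kL_j`, `s_j = sinh kL_j`, there
is a derivative fraction `p ∈ (0,1)` at which the eigenvector slopes of the two vertex
transfer matrices coincide; moreover the discriminants under the square roots are
nonnegative for all `p ∈ [0,1]`. -/
theorem two_lengths_tree_common_eigenvector (k L₁ L₂ : ℝ) (hk : 0 < k)
    (hL₁ : 0 < L₁) (hL₂ : 0 < L₂) (c₁ s₁ c₂ s₂ : ℝ)
    (hc₁ : c₁ = Real.cosh (k * L₁)) (hs₁ : s₁ = Real.sinh (k * L₁))
    (hc₂ : c₂ = Real.cosh (k * L₂)) (hs₂ : s₂ = Real.sinh (k * L₂)) :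
    (∀ p ∈ Set.Icc (0 : ℝ) 1,
      0 ≤ (c₁ + p * c₁) ^ 2 - 4 * p ∧
      0 ≤ (c₂ + (1 - p) * c₂) ^ 2 - 4 * (1 - p)) ∧
    ∃ p ∈ Set.Ioo (0 : ℝ) 1,
      (p * c₁ - c₁ - Real.sqrt ((c₁ + p * c₁) ^ 2 - 4 * p)) / (2 * s₁) =
      ((1 - p) * c₂ - c₂ - Real.sqrt ((c₂ + (1 - p) * c₂) ^ 2 - 4 * (1 - p))) /
        (2 * s₂) := by
  have hx₁ : 0 < k * L₁ := mul_pos hk hL₁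
  have hx₂ : 0 < k * L₂ := mul_pos hk hL₂
  have hs₁pos : 0 < s₁ := by rw [hs₁]; exact Real.sinh_pos_iff.2 hx₁
  have hs₂pos : 0 < s₂ := by rw [hs₂]; exact Real.sinh_pos_iff.2 hx₂
  have hc₁gt : 1 < c₁ := by rw [hc₁]; exact Real.one_lt_cosh.2 hx₁.ne'
  have hc₂gt : 1 < c₂ := by rw [hc₂]; exact Real.one_lt_cosh.2 hx₂.ne'
  have hid₁ : c₁ ^ 2 = s₁ ^ 2 + 1 := by rw [hc₁, hs₁]; exact Real.cosh_sq (k * L₁)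
  have hid₂ : c₂ ^ 2 = s₂ ^ 2 + 1 := by rw [hc₂, hs₂]; exact Real.cosh_sq (k * L₂)
  have hgt₁ : s₁ < c₁ := by rw [hc₁, hs₁]; exact Real.sinh_lt_cosh _
  have hgt₂ : s₂ < c₂ := by rw [hc₂, hs₂]; exact Real.sinh_lt_cosh _
  constructor
  · intro p hp
    obtain ⟨hp0, hp1⟩ := hp
    constructor
    · nlinarith [sq_nonneg (1 - p), sq_nonneg (1 + p), sq_nonneg (c₁ - 1)]
    · nlinarith [sq_nonneg p, sq_nonneg (2 - p), sq_nonneg (c₂ - 1)]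
  · set g : ℝ → ℝ := fun p =>
      (p * c₁ - c₁ - Real.sqrt ((c₁ + p * c₁) ^ 2 - 4 * p)) / (2 * s₁) -
      ((1 - p) * c₂ - c₂ - Real.sqrt ((c₂ + (1 - p) * c₂) ^ 2 - 4 * (1 - p))) /
        (2 * s₂) with hg
    have hcont : Continuous g := by
      apply Continuous.sub <;> apply Continuous.div_const <;>
        apply Continuous.sub <;> continuity
    have hg0 : g 0 = 1 - c₁ / s₁ := by
      have h1 : Real.sqrt ((c₁ + 0 * c₁) ^ 2 - 4 * 0) = c₁ := by
        rw [show (c₁ + 0 * c₁) ^ 2 - 4 * 0 = c₁ ^ 2 by ring]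
        exact Real.sqrt_sq (by linarith)
      have h2 : Real.sqrt ((c₂ + (1 - 0) * c₂) ^ 2 - 4 * (1 - 0)) = 2 * s₂ := by
        rw [show (c₂ + (1 - 0) * c₂) ^ 2 - 4 * (1 - 0) = (2 * s₂) ^ 2 by linear_combination 4 * hid₂]
        exact Real.sqrt_sq (by linarith)
      rw [hg]; simp only
      rw [h1, h2]
      field_simp
      ring
    have hg1 : g 1 = c₂ / s₂ - 1 := by
      have h1 : Real.sqrt ((c₁ + 1 * c₁) ^ 2 - 4 * 1) = 2 * s₁ := by
        rw [show (c₁ + 1 * c₁) ^ 2 - 4 * 1 = (2 * s₁) ^ 2 by linear_combination 4 * hid₁]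
        exact Real.sqrt_sq (by linarith)
      have h2 : Real.sqrt ((c₂ + (1 - 1) * c₂) ^ 2 - 4 * (1 - 1)) = c₂ := by
        rw [show (c₂ + (1 - 1) * c₂) ^ 2 - 4 * (1 - 1) = c₂ ^ 2 by ring]
        exact Real.sqrt_sq (by linarith)
      rw [hg]; simp only
      rw [h1, h2]
      field_simp
      ring
    have hg0neg : g 0 < 0 := by
      rw [hg0]
      have : 1 < c₁ / s₁ := (one_lt_div hs₁pos).2 hgt₁
      linarith
    have hg1pos : 0 < g 1 := by
      rw [hg1]
      have : 1 < c₂ / s₂ := (one_lt_div hs₂pos).2 hgt₂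
      linarith
    have hsub := intermediate_value_Ioo (le_of_lt zero_lt_one) hcont.continuousOn
    have h0mem : (0 : ℝ) ∈ Set.Ioo (g 0) (g 1) := ⟨hg0neg, hg1pos⟩
    obtain ⟨p, hp, hgp⟩ := hsub h0mem
    refine ⟨p, hp, ?_⟩
    have : g p = 0 := hgp
    rw [hg] at this
    simp only at this
    linarith
end

section
/- Define λ(δ) := cosh 2 + (δ/2)·sinh 2 − ( (cosh 2 + (δ/2)·sinh 2)² − 1 )^{1/2} for δ ≥ 0. Then −(1/2)·log λ(δ) = 1 + δ/4 + O(δ²) as δ → 0⁺; that is, there exist constants C > 0 and δ₀ > 0 such that |−(1/2)·log λ(δ) − (1 + δ/4)| ≤ C·δ² for all δ ∈ (0, δ₀). -/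
set_option maxHeartbeats 1000000 in
/-- Millipede decay-rate asymptotics (Section 4.4): the decay rate per unit length
`−(1/2)log λ(δ)`, where
`λ(δ) = cosh 2 + (δ/2)sinh 2 − √((cosh 2 + (δ/2)sinh 2)² − 1)`, satisfies
`−(1/2)log λ(δ) = 1 + δ/4 + O(δ²)` as `δ → 0⁺`. -/
theorem millipede_decay_rate_expansion
    (lam : ℝ → ℝ)
    (hlam : ∀ δ : ℝ, lam δ = Real.cosh 2 + (δ / 2) * Real.sinh 2 -
      Real.sqrt ((Real.cosh 2 + (δ / 2) * Real.sinh 2) ^ 2 - 1)) :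
    ∃ C > (0 : ℝ), ∃ δ₀ > (0 : ℝ), ∀ δ : ℝ, 0 < δ → δ < δ₀ →
      |(-(1 / 2) * Real.log (lam δ)) - (1 + δ / 4)| ≤ C * δ ^ 2 := by
  refine ⟨1, one_pos, 1/2, by norm_num, fun δ hδ hδ2 => ?_⟩
  obtain ⟨a, ha⟩ : ∃ a : ℝ, Real.cosh 2 + (δ / 2) * Real.sinh 2 = a := ⟨_, rfl⟩
  obtain ⟨s, hs⟩ : ∃ s : ℝ, Real.sqrt (a ^ 2 - 1) = s := ⟨_, rfl⟩
  have hlam' : lam δ = a - s := by rw [hlam δ, ha, hs]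
  have hsinh2 : 0 < Real.sinh 2 := by
    have := Real.sinh_pos_iff (x := 2); exact this.2 (by norm_num)
  have hcosh2 : 1 ≤ Real.cosh 2 := Real.one_le_cosh 2
  have h1a : 1 ≤ a := by
    rw [← ha]
    have h0 : 0 ≤ δ / 2 * Real.sinh 2 := mul_nonneg (by linarith) hsinh2.le
    linarith
  have ha2 : 0 ≤ a ^ 2 - 1 := by nlinarith
  have hs2 : s ^ 2 = a ^ 2 - 1 := by rw [← hs]; exact Real.sq_sqrt ha2
  have hsnn : 0 ≤ s := by rw [← hs]; exact Real.sqrt_nonneg _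
  have hpos : 0 < a + s := by linarith
  -- lam δ = (a + s)⁻¹
  have hlamδ : lam δ = (a + s)⁻¹ := by
    rw [hlam']
    refine eq_inv_of_mul_eq_one_left ?_
    linear_combination -hs2
  have hloglam : Real.log (lam δ) = - Real.log (a + s) := by
    rw [hlamδ, Real.log_inv]
  obtain ⟨L, hL⟩ : ∃ L : ℝ, Real.log (a + s) = L := ⟨_, rfl⟩
  rw [hL] at hloglam
  -- Upper bound: a ≤ cosh (2 + δ/2), hence L ≤ 2 + δ/2
  have haub : a ≤ Real.cosh (2 + δ / 2) := by
    rw [← ha, Real.cosh_add]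
    have h1 : 1 ≤ Real.cosh (δ / 2) := Real.one_le_cosh _
    have h2 : δ / 2 ≤ Real.sinh (δ / 2) := le_of_lt (Real.self_lt_sinh_iff.2 (by linarith))
    have hA : Real.cosh 2 * 1 ≤ Real.cosh 2 * Real.cosh (δ / 2) :=
      mul_le_mul_of_nonneg_left h1 (by linarith)
    have hB : Real.sinh 2 * (δ / 2) ≤ Real.sinh 2 * Real.sinh (δ / 2) :=
      mul_le_mul_of_nonneg_left h2 hsinh2.le
    nlinarith
  have hLub : L ≤ 2 + δ / 2 := by
    rw [← hL, Real.log_le_iff_le_exp hpos, ← Real.cosh_add_sinh]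
    have hsub : s ≤ Real.sinh (2 + δ / 2) := by
      have hsinhnn : 0 ≤ Real.sinh (2 + δ / 2) := Real.sinh_nonneg_iff.2 (by linarith)
      have hsq : a ^ 2 ≤ Real.cosh (2 + δ / 2) ^ 2 :=
        pow_le_pow_left₀ (by linarith) haub 2
      have h' : s ≤ Real.sqrt (Real.cosh (2 + δ / 2) ^ 2 - 1) := by
        rw [← hs]; apply Real.sqrt_le_sqrt; linarith
      calc s ≤ Real.sqrt (Real.cosh (2 + δ / 2) ^ 2 - 1) := h'
        _ = Real.sqrt (Real.sinh (2 + δ / 2) ^ 2) := by rw [Real.cosh_sq]; ring_nf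
        _ = Real.sinh (2 + δ / 2) := Real.sqrt_sq hsinhnn
    linarith
  -- Lower bound: cosh (2 + δ/2 - δ²) ≤ a, hence 2 + δ/2 - δ² ≤ L
  obtain ⟨y, hy⟩ : ∃ y : ℝ, (2 : ℝ) + δ / 2 - δ ^ 2 = y := ⟨_, rfl⟩
  have hy2 : 2 ≤ y := by
    rw [← hy]
    nlinarith [mul_nonneg hδ.le (by linarith : (0:ℝ) ≤ 1/2 - δ)]
  have hcoshy : Real.cosh y ≤ a := by
    -- step 1: cosh y + δ² sinh 2 ≤ cosh (2 + δ/2)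
    have step1 : Real.cosh y + δ ^ 2 * Real.sinh 2 ≤ Real.cosh (2 + δ / 2) := by
      have hE : (2 : ℝ) + δ / 2 = y + δ ^ 2 := by rw [← hy]; ring
      rw [hE, Real.cosh_add]
      have h1 : 1 ≤ Real.cosh (δ ^ 2) := Real.one_le_cosh _
      have h2 : δ ^ 2 ≤ Real.sinh (δ ^ 2) := le_of_lt (Real.self_lt_sinh_iff.2 (by positivity))
      have h3 : Real.sinh 2 ≤ Real.sinh y := Real.sinh_le_sinh.2 hy2
      have h4 : (0:ℝ) < Real.cosh y := Real.cosh_pos y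
      have h5 : 0 ≤ Real.sinh y := by linarith
      have hA : Real.cosh y * 1 ≤ Real.cosh y * Real.cosh (δ ^ 2) :=
        mul_le_mul_of_nonneg_left h1 h4.le
      have hB : Real.sinh 2 * δ ^ 2 ≤ Real.sinh y * Real.sinh (δ ^ 2) :=
        mul_le_mul h3 h2 (sq_nonneg δ) h5
      nlinarith
    -- step 2: cosh (2 + δ/2) ≤ a + δ² * cosh 2 / 4
    have step2 : Real.cosh (2 + δ / 2) ≤ a + δ ^ 2 * Real.cosh 2 / 4 := by
      have habs : |δ / 2| ≤ 1 := by rw [abs_of_pos (by linarith : (0:ℝ) < δ / 2)]; linarith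
      have habs' : |-(δ / 2)| ≤ 1 := by rwa [abs_neg]
      have e1 := (abs_le.1 (Real.abs_exp_sub_one_sub_id_le habs)).2
      have e2 := (abs_le.1 (Real.abs_exp_sub_one_sub_id_le habs')).2
      have hexp1 : Real.exp (δ / 2) ≤ 1 + δ / 2 + (δ / 2) ^ 2 := by linarith
      have hexp2 : Real.exp (-(δ / 2)) ≤ 1 - δ / 2 + (δ / 2) ^ 2 := by
        nlinarith [e2]
      have hE1 : Real.exp (2 + δ / 2) = Real.exp 2 * Real.exp (δ / 2) := by
        rw [← Real.exp_add]
      have hE2 : Real.exp (-(2 + δ / 2)) = Real.exp (-2) * Real.exp (-(δ / 2)) := by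
        rw [← Real.exp_add]; ring_nf
      have hexp2pos : (0:ℝ) < Real.exp 2 := Real.exp_pos 2
      have hexpm2pos : (0:ℝ) < Real.exp (-2) := Real.exp_pos _
      have hP1 : Real.exp 2 * Real.exp (δ / 2) ≤
          Real.exp 2 * (1 + δ / 2 + (δ / 2) ^ 2) :=
        mul_le_mul_of_nonneg_left hexp1 hexp2pos.le
      have hP2 : Real.exp (-2) * Real.exp (-(δ / 2)) ≤
          Real.exp (-2) * (1 - δ / 2 + (δ / 2) ^ 2) :=
        mul_le_mul_of_nonneg_left hexp2 hexpm2pos.le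
      rw [← ha, Real.cosh_eq (2 + δ / 2), Real.cosh_eq 2, Real.sinh_eq 2, hE1, hE2]
      nlinarith [hP1, hP2]
    -- step 3: cosh 2 ≤ 4 sinh 2
    have step3 : Real.cosh 2 ≤ 4 * Real.sinh 2 := by
      rw [Real.cosh_eq, Real.sinh_eq]
      have he2 : (3 : ℝ) ≤ Real.exp 2 := by
        have := Real.add_one_le_exp (2 : ℝ); linarith
      have hem2 : Real.exp (-2) = (Real.exp 2)⁻¹ := Real.exp_neg 2
      have hinv : (Real.exp 2)⁻¹ ≤ 1/3 := by
        rw [inv_le_comm₀ (by positivity) (by norm_num)]; linarith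
      rw [hem2]
      linarith
    nlinarith [sq_nonneg δ]
  have hLlb : y ≤ L := by
    rw [← hL, Real.le_log_iff_exp_le hpos, ← Real.cosh_add_sinh]
    have hsinhy_nn : 0 ≤ Real.sinh y := Real.sinh_nonneg_iff.2 (by linarith)
    have hcoshy1 : 1 ≤ Real.cosh y := Real.one_le_cosh y
    have hslb : Real.sinh y ≤ s := by
      have hsy : Real.sinh y = Real.sqrt (Real.cosh y ^ 2 - 1) := by
        rw [Real.cosh_sq]
        rw [show Real.sinh y ^ 2 + 1 - 1 = Real.sinh y ^ 2 by ring, Real.sqrt_sq hsinhy_nn]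
      have hsq : Real.cosh y ^ 2 ≤ a ^ 2 :=
        pow_le_pow_left₀ (by linarith) hcoshy 2
      rw [hsy, ← hs]
      apply Real.sqrt_le_sqrt; linarith
    linarith
  -- conclude
  rw [hloglam]
  have hrw : -(1/2 : ℝ) * -L - (1 + δ / 4) = L / 2 - 1 - δ / 4 := by ring
  rw [hrw, abs_le]
  rw [← hy] at hLlb
  constructor
  · nlinarith
  · nlinarith
end
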